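/- arXiv:2410.03946 — 7 statements merged into one kernel-verified Lean document; each statement's English description precedes it below -/
import Mathlib

section
/- Let τ ≥ 1 and c̃ > 0, and let α∞ ∈ ℝ satisfy the Diophantine condition |n α∞|_T ≥ c̃ |n|^{-τ} for every integer n ≠ 0. Let L₁ ≥ 2 be an integer, let m ∈ ℤ be coprime to L₁, set α := 2πm/L₁, and assume |α − α∞| ≤ 2π/L₁². Then there exists c > 0, depending only on c̃ and τ (and not on L₁, m or α∞), such that |n α|_T ≥ c |n|^{-τ} for every integer n with 0 < |n| ≤ L₁/2. -/
noncomputable section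

/-- The distance on the torus of length `2π`: `|x|_T = min_{n ∈ ℤ} |x + 2πn|`. -/
def torusDist (x : ℝ) : ℝ := ⨅ n : ℤ, |x + n * (2 * Real.pi)|

lemma tD_bdd (x : ℝ) : BddBelow (Set.range fun n : ℤ => |x + n * (2 * Real.pi)|) :=
  ⟨0, by rintro y ⟨n, rfl⟩; positivity⟩

lemma tD_sub_le (x y : ℝ) : torusDist y - |y - x| ≤ torusDist x := by
  apply le_ciInf
  intro k
  have h1 : torusDist y ≤ |y + k * (2 * Real.pi)| := ciInf_le (tD_bdd y) k
  have h2 : |y + k * (2 * Real.pi)| ≤ |x + k * (2 * Real.pi)| + |y - x| := by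
    have h : y + k * (2 * Real.pi) = (x + k * (2 * Real.pi)) + (y - x) := by ring
    rw [h]; exact abs_add_le _ _
  linarith

lemma tD_rat (p : ℤ) (q : ℕ) (hq : 0 < q) (hd : ¬ ((q : ℤ) ∣ p)) :
    2 * Real.pi / q ≤ torusDist (2 * Real.pi * p / q) := by
  apply le_ciInf
  intro k
  have hq' : (0:ℝ) < q := by exact_mod_cast hq
  have key : 2 * Real.pi * p / q + k * (2 * Real.pi)
      = (2 * Real.pi) * ((p + k * q : ℤ) : ℝ) / q := by
    push_cast; field_simp
  rw [key]
  have hne : (p + k * q : ℤ) ≠ 0 := by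
    intro h
    exact hd ⟨-k, by linarith [h]⟩
  have h1 : (1:ℝ) ≤ |((p + k * q : ℤ) : ℝ)| := by
    rw [← Int.cast_abs]
    exact_mod_cast Int.one_le_abs hne
  rw [abs_div, abs_mul, abs_of_pos (by positivity : (0:ℝ) < 2 * Real.pi),
    abs_of_pos hq']
  have hpi := Real.pi_pos
  rw [show 2 * Real.pi / (q:ℝ) = 2 * Real.pi * 1 / (q:ℝ) by ring]
  gcongr

/-- The best rational approximant of a Diophantine frequency satisfies the
finite-volume Diophantine property, with a constant independent of the volume. -/
theorem stmt2 (τ ctil : ℝ) (hτ : 1 ≤ τ) (hctil : 0 < ctil) :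
    ∃ c > 0, ∀ αInf : ℝ,
      (∀ n : ℤ, n ≠ 0 → ctil * |(n : ℝ)| ^ (-τ) ≤ torusDist ((n : ℝ) * αInf)) →
      ∀ (L₁ : ℕ) (m : ℤ) (α : ℝ), 2 ≤ L₁ → IsCoprime m (L₁ : ℤ) →
        α = 2 * Real.pi * (m : ℝ) / (L₁ : ℝ) → |α - αInf| ≤ 2 * Real.pi / (L₁ : ℝ) ^ 2 →
        ∀ n : ℤ, n ≠ 0 → |(n : ℝ)| ≤ (L₁ : ℝ) / 2 →
          c * |(n : ℝ)| ^ (-τ) ≤ torusDist ((n : ℝ) * α) := by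
  refine ⟨ctil / 2, by positivity, ?_⟩
  intro αInf hdio L₁ m α hL hcop hα hclose n hn hn2
  have hL' : (2:ℝ) ≤ (L₁:ℝ) := by exact_mod_cast hL
  have hLpos : (0:ℝ) < (L₁:ℝ) := by linarith
  have hX : (0:ℝ) ≤ |(n:ℝ)| ^ (-τ) := Real.rpow_nonneg (abs_nonneg _) _
  have hnabs : (1:ℝ) ≤ |(n:ℝ)| := by
    rw [← Int.cast_abs]; exact_mod_cast Int.one_le_abs hn
  -- non-divisibility
  have hnd : ¬ ((L₁ : ℤ) ∣ n * m) := by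
    intro h
    have hdn : (L₁ : ℤ) ∣ n := (hcop.symm).dvd_of_dvd_mul_right h
    have h5 : (L₁ : ℤ) ≤ |n| := Int.le_of_dvd (abs_pos.mpr hn) ((dvd_abs _ _).mpr hdn)
    have h6 : (L₁ : ℝ) ≤ |(n:ℝ)| := by rw [← Int.cast_abs]; exact_mod_cast h5
    linarith
  -- rewrite n*α
  have hrw : (n:ℝ) * α = 2 * Real.pi * ((n * m : ℤ) : ℝ) / (L₁:ℝ) := by
    rw [hα]; push_cast; ring
  have hrat : 2 * Real.pi / (L₁:ℝ) ≤ torusDist ((n:ℝ) * α) := by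
    rw [hrw]; exact tD_rat (n * m) L₁ (by omega) hnd
  have hpi := Real.pi_pos
  by_cases hc : ctil * |(n:ℝ)| ^ (-τ) ≤ 2 * Real.pi / (L₁:ℝ)
  · nlinarith
  · push_neg at hc
    have hinf := hdio n hn
    have hdiff : |(n:ℝ) * αInf - (n:ℝ) * α| ≤ Real.pi / (L₁:ℝ) := by
      have h1 : |(n:ℝ) * αInf - (n:ℝ) * α| = |(n:ℝ)| * |α - αInf| := by
        rw [← abs_mul]; rw [abs_sub_comm]; ring_nf
      rw [h1]
      have h2 : |(n:ℝ)| * |α - αInf| ≤ ((L₁:ℝ)/2) * (2 * Real.pi / (L₁:ℝ)^2) :=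
        mul_le_mul hn2 hclose (abs_nonneg _) (by linarith)
      have h3 : ((L₁:ℝ)/2) * (2 * Real.pi / (L₁:ℝ)^2) = Real.pi / (L₁:ℝ) := by
        field_simp
      linarith
    have h4 := tD_sub_le ((n:ℝ) * α) ((n:ℝ) * αInf)
    have h6 : 2 * Real.pi / (L₁:ℝ) = 2 * (Real.pi / (L₁:ℝ)) := by ring
    linarith

end
end

section
/- Let n, S ∈ ℕ, let ℋ = ℓ²({1,…,n}; ℂ^S), and let X be the self-adjoint operator (Xf)(x) = x·f(x). Let H be a self-adjoint operator on ℋ, and suppose there exist α₀ ∈ (0,1] and C₁ > 0 such that ‖e^{αX} H e^{-αX} − H‖ ≤ C₁|α| for all real α with |α| ≤ α₀. Let z ∈ ℂ with dist(z, spec(H)) ≥ δ for some δ > 0. Then for every c with 0 < c ≤ min(α₀, δ/(2C₁)), the S×S matrix-valued kernel of the resolvent satisfies ‖(H−z)^{-1}(x,y)‖ ≤ (2/δ) e^{-c|x−y|} for all x, y ∈ {1,…,n}. -/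
/-!
Conjugation by `e^{αX}` turns `H` into `H_α = e^{αX} H e^{-αX}` and multiplies the `(x, y)` entry
of the resolvent by `e^{α(x - y)}`. Since `H` is self-adjoint, `‖(H - z)⁻¹‖ ≤ δ⁻¹`; for `|α| = c` the
conjugation bound gives `‖H_α - H‖ ≤ δ / 2`, so by the resolvent identity `‖(H_α - z)⁻¹‖ ≤ 2 / δ`,
and this bounds every entry. Taking the sign of `α` to be that of `x - y` yields `e^{-c|x - y|}`.
-/

section

open scoped Matrix Matrix.Norms.L2Operator Ring

theorem exists_abs_eq_and_mul_eq_mul_abs {R : Type*} [Ring R] [LinearOrder R] [IsOrderedRing R]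
    {c : R} (hc : 0 ≤ c) (t : R) : ∃ α, |α| = c ∧ α * t = c * |t| := by
  rcases le_total 0 t with ht | ht
  · exact ⟨c, abs_of_nonneg hc, by rw [abs_of_nonneg ht]⟩
  · exact ⟨-c, by rw [abs_neg, abs_of_nonneg hc], by rw [abs_of_nonpos ht, neg_mul, mul_neg]⟩

theorem norm_inverse_sub_smul_one_le {A : Type*} [CStarAlgebra A] {a : A} [IsStarNormal a]
    {z : ℂ} {δ : ℝ} (hδ : 0 < δ) (hz : ∀ w ∈ spectrum ℂ a, δ ≤ dist z w) :
    ‖(a - z • 1)⁻¹ʳ‖ ≤ δ⁻¹ := by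
  have hne : ∀ w ∈ spectrum ℂ a, w - z ≠ 0 := fun w hw h => by
    have := hz w hw
    rw [dist_comm, dist_eq_norm, h, norm_zero] at this
    linarith
  have hcfc : cfc (fun w => (w - z)⁻¹) a = (a - z • 1)⁻¹ʳ := by
    rw [cfc_inv (fun w => w - z) a hne, cfc_sub .., cfc_id' .., cfc_const ..,
      Algebra.algebraMap_eq_smul_one]
  rw [← hcfc]
  refine norm_cfc_le (by positivity) fun w hw => ?_
  rw [norm_inv, ← dist_eq_norm, dist_comm]
  exact inv_anti₀ hδ (hz w hw)

theorem isUnit_sub_smul_one_of_notMem_spectrum {A : Type*} [Ring A] [Algebra ℂ A] {a : A} {z : ℂ}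
    (hz : z ∉ spectrum ℂ a) : IsUnit (a - z • 1) := by
  simpa [Algebra.algebraMap_eq_smul_one] using (spectrum.notMem_iff.mp hz).neg

theorem norm_inverse_le_two_mul {R : Type*} [NormedRing R] [HasSummableGeomSeries R] {a b : R}
    (ha : IsUnit a) (h : ‖a⁻¹ʳ‖ * ‖b - a‖ ≤ 1 / 2) : ‖b⁻¹ʳ‖ ≤ 2 * ‖a⁻¹ʳ‖ := by
  have hb : IsUnit b := by
    have hfac : b = a * (1 - -(a⁻¹ʳ * (b - a))) := by
      rw [sub_neg_eq_add, mul_add, ← mul_assoc, Ring.mul_inverse_cancel a ha, mul_one, one_mul,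
        add_sub_cancel]
    rw [hfac]
    refine ha.mul (isUnit_one_sub_of_norm_lt_one ?_)
    calc ‖-(a⁻¹ʳ * (b - a))‖ ≤ ‖a⁻¹ʳ‖ * ‖b - a‖ := (norm_neg _).trans_le (norm_mul_le _ _)
      _ < 1 := by linarith
  have hres : b⁻¹ʳ = a⁻¹ʳ - a⁻¹ʳ * (b - a) * b⁻¹ʳ := by
    rw [mul_sub, sub_mul, mul_assoc, Ring.mul_inverse_cancel b hb, Ring.inverse_mul_cancel a ha,
      one_mul, mul_one, sub_sub_cancel]
  have hle : ‖b⁻¹ʳ‖ ≤ ‖a⁻¹ʳ‖ + 1 / 2 * ‖b⁻¹ʳ‖ :=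
    calc ‖b⁻¹ʳ‖ = ‖a⁻¹ʳ - a⁻¹ʳ * (b - a) * b⁻¹ʳ‖ := congrArg _ hres
      _ ≤ ‖a⁻¹ʳ‖ + ‖a⁻¹ʳ‖ * ‖b - a‖ * ‖b⁻¹ʳ‖ :=
          (norm_sub_le _ _).trans (add_le_add le_rfl norm_mul₃_le)
      _ ≤ ‖a⁻¹ʳ‖ + 1 / 2 * ‖b⁻¹ʳ‖ := by gcongr
  linarith

namespace Matrix

theorem norm_apply_le_l2_opNorm {𝕜 m n : Type*} [RCLike 𝕜] [Fintype m] [Fintype n]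
    [DecidableEq n] (A : Matrix m n 𝕜) (i : m) (j : n) : ‖A i j‖ ≤ ‖A‖ := by
  set e := EuclideanSpace.single j (1 : 𝕜)
  calc ‖A i j‖ = ‖(EuclideanSpace.equiv m 𝕜).symm (A *ᵥ e.ofLp) i‖ := by simp [e]
    _ ≤ ‖(EuclideanSpace.equiv m 𝕜).symm (A *ᵥ e.ofLp)‖ := PiLp.norm_apply_le _ _
    _ ≤ ‖A‖ * ‖e‖ := A.l2_opNorm_mulVec e
    _ = ‖A‖ := by simp [e]

theorem inv_mul_mul_of_mul_eq_one {ι R : Type*} [Fintype ι] [DecidableEq ι] [CommRing R]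
    {D E : Matrix ι ι R} (h : D * E = 1) (M : Matrix ι ι R) :
    (D * M * E)⁻¹ = D * M⁻¹ * E := by
  rw [mul_inv_rev, mul_inv_rev, inv_eq_right_inv h, inv_eq_left_inv h, mul_assoc]

variable {ι : Type*} [Fintype ι] [DecidableEq ι]

/-- `expWeight w α` is `e^{αX}` for the position operator `X = diagonal w`. -/
noncomputable def expWeight (w : ι → ℝ) (α : ℝ) : Matrix ι ι ℂ :=
  diagonal fun i => (Real.exp (α * w i) : ℂ)

theorem expWeight_mul_expWeight_neg (w : ι → ℝ) (α : ℝ) :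
    expWeight w α * expWeight w (-α) = 1 := by
  rw [expWeight, expWeight, diagonal_mul_diagonal, ← diagonal_one]
  congr 1
  ext i
  rw [← Complex.ofReal_mul, ← Real.exp_add, neg_mul, add_neg_cancel, Real.exp_zero,
    Complex.ofReal_one]

theorem expWeight_mul_mul_expWeight_neg_apply (w : ι → ℝ) (α : ℝ) (M : Matrix ι ι ℂ) (i j : ι) :
    (expWeight w α * M * expWeight w (-α)) i j = Real.exp (α * (w i - w j)) * M i j := by
  rw [expWeight, expWeight, mul_diagonal, diagonal_mul, mul_sub, sub_eq_add_neg, Real.exp_add,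
    Complex.ofReal_mul, neg_mul]
  ring

theorem of_exp_mul_eq_expWeight_mul_mul (w : ι → ℝ) (α : ℝ) (H : Matrix ι ι ℂ) :
    of (fun i j => (Real.exp (α * (w i - w j)) : ℂ) * H i j) =
      expWeight w α * H * expWeight w (-α) := by
  ext i j
  rw [expWeight_mul_mul_expWeight_neg_apply, of_apply]

theorem norm_inv_sub_smul_one_apply_le {H : Matrix ι ι ℂ} (hH : H.IsHermitian) {z : ℂ} {δ : ℝ}
    (hδ : 0 < δ) (hz : ∀ w ∈ spectrum ℂ H, δ ≤ dist z w) (w : ι → ℝ) {α : ℝ}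
    (hconj : ‖expWeight w α * H * expWeight w (-α) - H‖ ≤ δ / 2) (i j : ι) :
    ‖(H - z • 1)⁻¹ i j‖ ≤ 2 / δ * Real.exp (-(α * (w i - w j))) := by
  have : IsStarNormal H := hH.isSelfAdjoint.isStarNormal
  set D := expWeight w α
  set E := expWeight w (-α)
  have hDE : D * E = 1 := expWeight_mul_expWeight_neg w α
  have hunit : IsUnit (H - z • 1) := isUnit_sub_smul_one_of_notMem_spectrum fun hzH => by
    have := hz z hzH
    rw [dist_self] at this
    linarith
  have hres : ‖(H - z • 1)⁻¹ʳ‖ ≤ δ⁻¹ := norm_inverse_sub_smul_one_le hδ hz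
  have hsim : D * H * E - z • 1 = D * (H - z • 1) * E := by
    rw [mul_sub, sub_mul, mul_smul_comm, smul_mul_assoc, mul_one, hDE]
  have hconj_res : ‖D * (H - z • 1)⁻¹ * E‖ ≤ 2 / δ := by
    rw [← inv_mul_mul_of_mul_eq_one hDE, ← hsim, nonsing_inv_eq_ringInverse]
    calc ‖(D * H * E - z • 1)⁻¹ʳ‖ ≤ 2 * ‖(H - z • 1)⁻¹ʳ‖ := by
          refine norm_inverse_le_two_mul hunit ?_
          rw [sub_sub_sub_cancel_right]
          calc ‖(H - z • 1)⁻¹ʳ‖ * ‖D * H * E - H‖ ≤ δ⁻¹ * (δ / 2) := by gcongr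
            _ = 1 / 2 := by field_simp
      _ ≤ 2 / δ := by
          rw [div_eq_mul_inv]
          gcongr
  have hentry := norm_apply_le_l2_opNorm (D * (H - z • 1)⁻¹ * E) i j
  rw [expWeight_mul_mul_expWeight_neg_apply, norm_mul, Complex.norm_real,
    Real.norm_of_nonneg (Real.exp_pos _).le] at hentry
  rw [Real.exp_neg, ← div_eq_mul_inv, le_div_iff₀ (Real.exp_pos _), mul_comm]
  exact hentry.trans hconj_res

end Matrix

end

theorem stmt5_general
    (n S : ℕ) (H : Matrix (Fin n × Fin S) (Fin n × Fin S) ℂ)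
    (hH : H.IsHermitian)
    (α₀ C₁ : ℝ) (hC₁ : 0 < C₁)
    (hconj : ∀ α : ℝ, |α| ≤ α₀ →
      ‖Matrix.toEuclideanCLM (𝕜 := ℂ)
          (Matrix.of fun i j : Fin n × Fin S =>
            (Real.exp (α * (((((i.1 : ℕ) : ℝ) + 1)) - ((((j.1 : ℕ) : ℝ) + 1)))) : ℂ) * H i j) -
        Matrix.toEuclideanCLM (𝕜 := ℂ) H‖ ≤ C₁ * |α|)
    (z : ℂ) (δ : ℝ) (hδ : 0 < δ)
    (hz : ∀ w ∈ spectrum ℂ H, δ ≤ dist z w) :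
    ∀ c : ℝ, 0 < c → c ≤ min α₀ (δ / (2 * C₁)) →
      ∀ (x y : Fin n) (σ ζ : Fin S),
        ‖(H - z • 1)⁻¹ (x, σ) (y, ζ)‖ ≤
          (2 / δ) * Real.exp (-c * |(((x : ℕ) : ℝ) + 1) - (((y : ℕ) : ℝ) + 1)|) := by
  intro c hc hcle x y σ ζ
  obtain ⟨hcα₀, hcδ⟩ := le_min_iff.mp hcle
  set w : Fin n × Fin S → ℝ := fun i => ((i.1 : ℕ) : ℝ) + 1
  obtain ⟨α, hα, hαxy⟩ := exists_abs_eq_and_mul_eq_mul_abs hc.le (w (x, σ) - w (y, ζ))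
  have hC₁c : C₁ * c ≤ δ / 2 := by
    rw [le_div_iff₀ (by positivity)] at hcδ
    linarith
  open scoped Matrix.Norms.L2Operator in
  have hHα : ‖Matrix.expWeight w α * H * Matrix.expWeight w (-α) - H‖ ≤ δ / 2 := by
    rw [← Matrix.of_exp_mul_eq_expWeight_mul_mul, Matrix.cstar_norm_def, map_sub]
    exact (hconj α (hα ▸ hcα₀)).trans (hα ▸ hC₁c)
  have hentry := Matrix.norm_inv_sub_smul_one_apply_le hH hδ hz w hHα (x, σ) (y, ζ)
  rwa [hαxy, ← neg_mul] at hentry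

/-- Combes–Thomas-type exponential decay estimate for resolvents under a
conjugation (commutator) bound. -/
theorem stmt5
    (n S : ℕ) (H : Matrix (Fin n × Fin S) (Fin n × Fin S) ℂ)
    (hH : H.IsHermitian)
    (α₀ C₁ : ℝ) (hα₀ : 0 < α₀) (hα₀1 : α₀ ≤ 1) (hC₁ : 0 < C₁)
    (hconj : ∀ α : ℝ, |α| ≤ α₀ →
      ‖Matrix.toEuclideanCLM (𝕜 := ℂ)
          (Matrix.of fun i j : Fin n × Fin S =>
            (Real.exp (α * (((((i.1 : ℕ) : ℝ) + 1)) - ((((j.1 : ℕ) : ℝ) + 1)))) : ℂ) * H i j) -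
        Matrix.toEuclideanCLM (𝕜 := ℂ) H‖ ≤ C₁ * |α|)
    (z : ℂ) (δ : ℝ) (hδ : 0 < δ)
    (hz : ∀ w ∈ spectrum ℂ H, δ ≤ dist z w) :
    ∀ c : ℝ, 0 < c → c ≤ min α₀ (δ / (2 * C₁)) →
      ∀ (x y : Fin n) (σ ζ : Fin S),
        ‖(H - z • 1)⁻¹ (x, σ) (y, ζ)‖ ≤
          (2 / δ) * Real.exp (-c * |(((x : ℕ) : ℝ) + 1) - (((y : ℕ) : ℝ) + 1)|) :=
  stmt5_general n S H hH α₀ C₁ hC₁ hconj z δ hδ hz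
end

section
/- Let α ∈ (0,1] and C₀ > 0. Let K, K_sing, K_reg, K₁, K₂ : (0,1]×(0,1] → ℂ and Δ : (0,1] → ℂ satisfy, for all η, θ, θ' ∈ (0,1]: (i) K(η,θ) = K_sing(η,θ) + K_reg(η,θ); (ii) |K_reg(η,θ) − K_reg(η,θ')| ≤ C₀(θ^α + θ'^α); (iii) |K₁(η,θ)| + |K₂(η,θ)| ≤ C₀(1 + |log θ|); (iv) η·K(η,θ) = −θ·(K₁(η,θ) + K₂(η,θ)) + Δ(θ) with |Δ(θ)| ≤ C₀θ. Then there exists C > 0, depending only on C₀ and α, such that for all η, θ ∈ (0,1]: |K(η,θ) − (K_sing(η,θ) − K_sing(η,η²))| ≤ C(θ^α + η^{α'}), where α' := min(α, 1/2). -/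
open Set

lemma aux_log_bd (x : ℝ) (hx : 0 < x) (hx1 : x ≤ 1) :
    x * |Real.log x| ≤ 2 * x ^ ((1:ℝ)/2) := by
  have ht : 0 < x ^ ((1:ℝ)/2) := Real.rpow_pos_of_pos hx _
  have habs : |Real.log x| = -Real.log x := abs_of_nonpos (Real.log_nonpos hx.le hx1)
  have hlog : Real.log (x ^ ((1:ℝ)/2)) = (1/2) * Real.log x := Real.log_rpow hx _
  have h1 : Real.log ((x ^ ((1:ℝ)/2))⁻¹) ≤ (x ^ ((1:ℝ)/2))⁻¹ - 1 :=
    Real.log_le_sub_one_of_pos (by positivity)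
  rw [Real.log_inv, hlog] at h1
  have hx12 : x ^ ((1:ℝ)/2) * x ^ ((1:ℝ)/2) = x := by
    rw [← Real.rpow_add hx]; norm_num
  have h2 : -Real.log x ≤ 2 * (x ^ ((1:ℝ)/2))⁻¹ := by
    have hinv : (0:ℝ) < (x ^ ((1:ℝ)/2))⁻¹ := by positivity
    nlinarith
  rw [habs]
  calc x * (-Real.log x) ≤ x * (2 * (x ^ ((1:ℝ)/2))⁻¹) :=
        mul_le_mul_of_nonneg_left h2 hx.le
    _ = 2 * x ^ ((1:ℝ)/2) := by
        field_simp
        nlinarith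

/-- Abstract consequence of the current–current Ward identity: the response
function equals its singular part evaluated at `θ` minus at `η²`, up to Hölder-small errors. -/
theorem stmt7 (α C₀ : ℝ) (hα : 0 < α) (hα1 : α ≤ 1) (hC₀ : 0 < C₀) :
    ∃ C > 0,
      ∀ (K Ksing Kreg K₁ K₂ : ℝ → ℝ → ℂ) (Δ : ℝ → ℂ),
        (∀ η ∈ Ioc (0 : ℝ) 1, ∀ θ ∈ Ioc (0 : ℝ) 1, K η θ = Ksing η θ + Kreg η θ) →
        (∀ η ∈ Ioc (0 : ℝ) 1, ∀ θ ∈ Ioc (0 : ℝ) 1, ∀ θ' ∈ Ioc (0 : ℝ) 1,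
          ‖Kreg η θ - Kreg η θ'‖ ≤ C₀ * (θ ^ α + θ' ^ α)) →
        (∀ η ∈ Ioc (0 : ℝ) 1, ∀ θ ∈ Ioc (0 : ℝ) 1,
          ‖K₁ η θ‖ + ‖K₂ η θ‖ ≤ C₀ * (1 + |Real.log θ|)) →
        (∀ η ∈ Ioc (0 : ℝ) 1, ∀ θ ∈ Ioc (0 : ℝ) 1,
          (η : ℂ) * K η θ = -(θ : ℂ) * (K₁ η θ + K₂ η θ) + Δ θ ∧ ‖Δ θ‖ ≤ C₀ * θ) →
        ∀ η ∈ Ioc (0 : ℝ) 1, ∀ θ ∈ Ioc (0 : ℝ) 1,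
          ‖K η θ - (Ksing η θ - Ksing η (η ^ 2))‖ ≤
            C * (θ ^ α + η ^ min α (1 / 2)) := by
  refine ⟨7 * C₀, by positivity, ?_⟩
  intro K Ksing Kreg K₁ K₂ Δ hdec hreg hlogb hward η hη θ hθ
  obtain ⟨hη0, hη1⟩ := hη
  obtain ⟨hθ0, hθ1⟩ := hθ
  have hs0 : (0:ℝ) < η ^ 2 := by positivity
  have hs1 : η ^ 2 ≤ 1 := by nlinarith
  have hs : η ^ 2 ∈ Ioc (0:ℝ) 1 := ⟨hs0, hs1⟩
  have e1 := hdec η ⟨hη0, hη1⟩ θ ⟨hθ0, hθ1⟩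
  have e2 := hdec η ⟨hη0, hη1⟩ (η ^ 2) hs
  have h3 := hreg η ⟨hη0, hη1⟩ θ ⟨hθ0, hθ1⟩ (η ^ 2) hs
  have h4 := hlogb η ⟨hη0, hη1⟩ (η ^ 2) hs
  obtain ⟨hw, hΔ⟩ := hward η ⟨hη0, hη1⟩ (η ^ 2) hs
  -- bound ‖K η (η^2)‖
  have hlog2 : |Real.log (η ^ 2)| = 2 * |Real.log η| := by
    rw [show Real.log (η ^ 2) = 2 * Real.log η by
      rw [Real.log_pow]; push_cast; ring]
    rw [abs_mul, abs_two]
  have hnormw : η * ‖K η (η ^ 2)‖ ≤ η ^ 2 * (C₀ * (1 + 2 * |Real.log η|)) + C₀ * η ^ 2 := by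
    have : ‖(η:ℂ) * K η (η ^ 2)‖ ≤ ‖(-((η:ℝ)^2 : ℂ)) * (K₁ η (η ^ 2) + K₂ η (η ^ 2))‖ + ‖Δ (η ^ 2)‖ := by
      rw [hw]; push_cast; exact norm_add_le _ _
    rw [norm_mul, norm_mul, norm_neg] at this
    have hη2n : ‖(η:ℂ) ^ 2‖ = η ^ 2 := by
      rw [norm_pow, Complex.norm_real, Real.norm_eq_abs, abs_of_pos hη0]
    have hηn : ‖(η:ℂ)‖ = η := by rw [Complex.norm_real, Real.norm_eq_abs, abs_of_pos hη0]
    rw [hηn, hη2n] at this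
    have hsum : ‖K₁ η (η ^ 2) + K₂ η (η ^ 2)‖ ≤ C₀ * (1 + 2 * |Real.log η|) := by
      calc ‖K₁ η (η ^ 2) + K₂ η (η ^ 2)‖ ≤ ‖K₁ η (η ^ 2)‖ + ‖K₂ η (η ^ 2)‖ := norm_add_le _ _
        _ ≤ C₀ * (1 + |Real.log (η ^ 2)|) := h4
        _ = C₀ * (1 + 2 * |Real.log η|) := by rw [hlog2]
    calc η * ‖K η (η ^ 2)‖
        ≤ η ^ 2 * ‖K₁ η (η ^ 2) + K₂ η (η ^ 2)‖ + ‖Δ (η ^ 2)‖ := this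
      _ ≤ η ^ 2 * (C₀ * (1 + 2 * |Real.log η|)) + C₀ * η ^ 2 := by
          gcongr
  have hsqrt : η * |Real.log η| ≤ 2 * η ^ ((1:ℝ)/2) := aux_log_bd η hη0 hη1
  have hKs : ‖K η (η ^ 2)‖ ≤ C₀ * (2 * η + 4 * η ^ ((1:ℝ)/2)) := by
    have hη' : η ^ 2 * (C₀ * (1 + 2 * |Real.log η|)) + C₀ * η ^ 2
        = η * (C₀ * (2 * η + 2 * (η * |Real.log η|))) := by ring
    rw [hη'] at hnormw
    have := le_of_mul_le_mul_left (by linarith [hnormw] : η * ‖K η (η ^ 2)‖ ≤ η * (C₀ * (2 * η + 2 * (η * |Real.log η|)))) hη0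
    calc ‖K η (η ^ 2)‖ ≤ C₀ * (2 * η + 2 * (η * |Real.log η|)) := this
      _ ≤ C₀ * (2 * η + 4 * η ^ ((1:ℝ)/2)) := by nlinarith
  -- rpow comparisons
  set α' := min α (1/2) with hα'
  have hα'pos : 0 < α' := lt_min hα (by norm_num)
  have hη12 : η ^ ((1:ℝ)/2) ≤ η ^ α' :=
    Real.rpow_le_rpow_of_exponent_ge hη0 hη1 (min_le_right _ _)
  have hη1' : η ≤ η ^ α' := by
    calc η = η ^ (1:ℝ) := (Real.rpow_one η).symm
      _ ≤ η ^ α' := Real.rpow_le_rpow_of_exponent_ge hη0 hη1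
          (le_trans (min_le_right _ _) (by norm_num))
  have hs_rpow : (η ^ 2 : ℝ) ^ α ≤ η ^ α' := by
    have : (η ^ 2 : ℝ) ^ α = η ^ (2 * α) := by
      rw [← Real.rpow_natCast η 2, ← Real.rpow_mul hη0.le]
      norm_num
    rw [this]
    exact Real.rpow_le_rpow_of_exponent_ge hη0 hη1
      (le_trans (min_le_left _ _) (by linarith))
  -- key identity
  have key : K η θ - (Ksing η θ - Ksing η (η ^ 2))
      = (Kreg η θ - Kreg η (η ^ 2)) + K η (η ^ 2) := by
    rw [e1, e2]; ring
  rw [key]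
  calc ‖(Kreg η θ - Kreg η (η ^ 2)) + K η (η ^ 2)‖
      ≤ ‖Kreg η θ - Kreg η (η ^ 2)‖ + ‖K η (η ^ 2)‖ := norm_add_le _ _
    _ ≤ C₀ * (θ ^ α + (η ^ 2 : ℝ) ^ α) + C₀ * (2 * η + 4 * η ^ ((1:ℝ)/2)) := by gcongr
    _ ≤ C₀ * (θ ^ α + η ^ α') + C₀ * (2 * η ^ α' + 4 * η ^ α') := by gcongr
    _ ≤ 7 * C₀ * (θ ^ α + η ^ α') := by
        have hθα : 0 ≤ θ ^ α := Real.rpow_nonneg hθ0.le α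
        have : 0 ≤ η ^ α' := Real.rpow_nonneg hη0.le α'
        nlinarith
end

section
/- Let γ ≥ 2, θ ∈ (0,1), let N ≥ 1 be an integer and ε ∈ (0, 1/4]. Set J := {−N, −N+1, …, 0} and 𝓑 := {ν ∈ ℝ^J : |ν_k| ≤ εγ^{θk} for all k ∈ J}. For each j ∈ {−N+1,…,0} let β_j : ℝ^J → ℝ satisfy: (locality in scales) β_j(ν) = β_j(ν') whenever ν_k = ν'_k for all k ∈ J with k ≥ j; (smallness) |β_j(ν)| ≤ ε²γ^j for all ν ∈ 𝓑; (Lipschitz continuity) |β_j(ν) − β_j(ν')| ≤ ε² max_{k∈J}|ν_k − ν'_k| for all ν, ν' ∈ 𝓑. Then there exists exactly one ν ∈ 𝓑 such that ν_{−N} = 0 and ν_j = γν_{j+1} + γβ_{j+1}(ν) for every j ∈ {−N, …, −1}. -/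
open Finset

lemma my_inv_le {a c : ℝ} (ha : 0 < a) (h : 1 ≤ c * a) : a⁻¹ ≤ c := by
  have h1 : a⁻¹ * a = 1 := inv_mul_cancel₀ ha.ne'
  nlinarith [h1, h, ha]

noncomputable def TzMap (γ : ℝ) (N : ℕ) (β : ℤ → (ℤ → ℝ) → ℝ) (ν : ℤ → ℝ) (j : ℤ) : ℝ :=
  if -(N : ℤ) ≤ j ∧ j ≤ 0 then -∑ k ∈ Finset.Icc (-(N : ℤ) + 1) j, γ ^ (k - j) * β k ν else 0

lemma geomIcc_le (s : ℝ) (h0 : 0 ≤ s) (h1 : s < 1) (a j : ℤ) :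
    ∑ k ∈ Finset.Icc a j, s ^ (j - k).toNat ≤ (1 - s)⁻¹ := by
  have hinj : ∀ x ∈ Finset.Icc a j, ∀ y ∈ Finset.Icc a j,
      (j - x).toNat = (j - y).toNat → x = y := by
    intro x hx y hy h
    simp only [Finset.mem_Icc] at hx hy
    omega
  calc ∑ k ∈ Finset.Icc a j, s ^ (j - k).toNat
      = ∑ m ∈ (Finset.Icc a j).image (fun k => (j - k).toNat), s ^ m :=
        (Finset.sum_image hinj).symm
    _ ≤ ∑' m : ℕ, s ^ m :=
        Summable.sum_le_tsum _ (fun i _ => pow_nonneg h0 i) (summable_geometric_of_lt_one h0 h1)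
    _ = (1 - s)⁻¹ := tsum_geometric_of_lt_one h0 h1

lemma zpow_sub_eq (γ : ℝ) (hγ0 : γ ≠ 0) {k j : ℤ} (hk : k ≤ j) :
    γ ^ (k - j) = γ⁻¹ ^ (j - k).toNat := by
  have hm : ((j - k).toNat : ℤ) = j - k := Int.toNat_of_nonneg (by omega)
  rw [inv_pow, ← zpow_natCast, hm, ← zpow_neg γ, neg_sub]

lemma TzMap_out (γ : ℝ) (N : ℕ) (β : ℤ → (ℤ → ℝ) → ℝ) (ν : ℤ → ℝ) (j : ℤ)
    (h : ¬(-(N : ℤ) ≤ j ∧ j ≤ 0)) : TzMap γ N β ν j = 0 := if_neg h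

lemma TzMap_bot (γ : ℝ) (N : ℕ) (hN : 1 ≤ N) (β : ℤ → (ℤ → ℝ) → ℝ) (ν : ℤ → ℝ) :
    TzMap γ N β ν (-(N : ℤ)) = 0 := by
  rw [TzMap, if_pos (by omega : -(N:ℤ) ≤ -(N:ℤ) ∧ -(N:ℤ) ≤ 0)]
  rw [Finset.Icc_eq_empty (by omega)]
  simp

lemma TzMap_step (γ : ℝ) (hγ0 : γ ≠ 0) (N : ℕ) (β : ℤ → (ℤ → ℝ) → ℝ) (ν : ℤ → ℝ)
    (j : ℤ) (hj1 : -(N : ℤ) ≤ j) (hj2 : j ≤ -1) :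
    TzMap γ N β ν j = γ * TzMap γ N β ν (j + 1) + γ * β (j + 1) ν := by
  rw [TzMap, TzMap, if_pos (by omega : -(N:ℤ) ≤ j ∧ j ≤ 0),
    if_pos (by omega : -(N:ℤ) ≤ j + 1 ∧ j + 1 ≤ 0)]
  have hins : Finset.Icc (-(N : ℤ) + 1) (j + 1)
      = insert (j + 1) (Finset.Icc (-(N : ℤ) + 1) j) := by
    ext x
    simp only [Finset.mem_Icc, Finset.mem_insert]
    omega
  have hnotmem : (j + 1) ∉ Finset.Icc (-(N : ℤ) + 1) j := by
    simp only [Finset.mem_Icc]; omega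
  rw [hins, Finset.sum_insert hnotmem]
  have h2 : γ * ∑ x ∈ Finset.Icc (-(N : ℤ) + 1) j, γ ^ (x - (j + 1)) * β x ν
      = ∑ x ∈ Finset.Icc (-(N : ℤ) + 1) j, γ ^ (x - j) * β x ν := by
    rw [Finset.mul_sum]
    refine Finset.sum_congr rfl fun k _ => ?_
    rw [← mul_assoc]
    congr 1
    rw [← zpow_one_add₀ hγ0]
    congr 1
    ring
  have h1 : γ ^ (j + 1 - (j + 1)) = (1:ℝ) := by simp
  rw [h1, ← h2]
  ring

lemma TzMap_bound (γ θ ε : ℝ) (hγ : 2 ≤ γ) (hθ0 : 0 < θ) (hθ1 : θ < 1)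
    (hε0 : 0 < ε) (hε : ε ≤ 1 / 4) (N : ℕ) (β : ℤ → (ℤ → ℝ) → ℝ) (ν : ℤ → ℝ)
    (hB : ∀ k : ℤ, -(N : ℤ) + 1 ≤ k → k ≤ 0 → |β k ν| ≤ ε ^ 2 * γ ^ k)
    (j : ℤ) (hj1 : -(N : ℤ) ≤ j) (hj2 : j ≤ 0) :
    |TzMap γ N β ν j| ≤ ε * γ ^ (θ * (j : ℝ)) := by
  have hγ0 : (0 : ℝ) < γ := by linarith
  have hγ0' : γ ≠ 0 := hγ0.ne'
  have hinv : γ⁻¹ ≤ 1 / 2 := my_inv_le hγ0 (by linarith)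
  have hinv0 : 0 ≤ γ⁻¹ := by positivity
  rw [TzMap, if_pos ⟨hj1, hj2⟩, abs_neg]
  have hterm : ∀ k ∈ Finset.Icc (-(N : ℤ) + 1) j,
      |γ ^ (k - j) * β k ν| ≤ ε ^ 2 * γ ^ j * (γ⁻¹ * γ⁻¹) ^ (j - k).toNat := by
    intro k hk
    simp only [Finset.mem_Icc] at hk
    have hzp : (0:ℝ) < γ ^ (k - j) := zpow_pos hγ0 _
    have h1 : |γ ^ (k - j) * β k ν| = γ ^ (k - j) * |β k ν| := by
      rw [abs_mul, abs_of_pos hzp]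
    rw [h1]
    have h2 : γ ^ (k - j) * |β k ν| ≤ γ ^ (k - j) * (ε ^ 2 * γ ^ k) :=
      mul_le_mul_of_nonneg_left (hB k hk.1 (le_trans hk.2 hj2)) hzp.le
    refine h2.trans (le_of_eq ?_)
    have hm : ((j - k).toNat : ℤ) = j - k := Int.toNat_of_nonneg (by omega)
    have h3 : ((γ⁻¹ * γ⁻¹) : ℝ) ^ (j - k).toNat = γ ^ (-(2 * (j - k))) := by
      have e1 : (γ⁻¹ * γ⁻¹ : ℝ) = γ ^ (-2 : ℤ) := by
        rw [show (-2:ℤ) = -1 + -1 from rfl, zpow_add₀ hγ0', zpow_neg_one]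
      rw [e1, ← zpow_natCast (γ ^ (-2 : ℤ)), hm, ← zpow_mul]
      congr 1
      ring
    rw [h3, mul_comm (γ ^ (k - j)) (ε ^ 2 * γ ^ k), mul_assoc, mul_assoc,
      ← zpow_add₀ hγ0', ← zpow_add₀ hγ0']
    congr 2
    ring
  calc |∑ k ∈ Finset.Icc (-(N : ℤ) + 1) j, γ ^ (k - j) * β k ν|
      ≤ ∑ k ∈ Finset.Icc (-(N : ℤ) + 1) j, |γ ^ (k - j) * β k ν| :=
        Finset.abs_sum_le_sum_abs _ _
    _ ≤ ∑ k ∈ Finset.Icc (-(N : ℤ) + 1) j, ε ^ 2 * γ ^ j * (γ⁻¹ * γ⁻¹) ^ (j - k).toNat :=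
        Finset.sum_le_sum hterm
    _ = ε ^ 2 * γ ^ j * ∑ k ∈ Finset.Icc (-(N : ℤ) + 1) j, (γ⁻¹ * γ⁻¹) ^ (j - k).toNat := by
        rw [Finset.mul_sum]
    _ ≤ ε ^ 2 * γ ^ j * (1 - γ⁻¹ * γ⁻¹)⁻¹ := by
        refine mul_le_mul_of_nonneg_left ?_ (by positivity)
        exact geomIcc_le _ (by positivity) (by nlinarith) _ _
    _ ≤ ε * γ ^ (θ * (j : ℝ)) := by
        have hA : (0:ℝ) < γ ^ j := zpow_pos hγ0 _
        have hAB : (γ : ℝ) ^ j ≤ γ ^ (θ * (j : ℝ)) := by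
          rw [← Real.rpow_intCast γ j]
          refine Real.rpow_le_rpow_of_exponent_le (by linarith) ?_
          have hj0 : (j : ℝ) ≤ 0 := by exact_mod_cast hj2
          nlinarith [mul_nonneg (by linarith : (0:ℝ) ≤ 1 - θ) (neg_nonneg.mpr hj0)]
        have hI : (1 - γ⁻¹ * γ⁻¹)⁻¹ ≤ 4 / 3 := my_inv_le (by nlinarith) (by nlinarith)
        have hB0 : (0:ℝ) < γ ^ (θ * (j:ℝ)) := Real.rpow_pos_of_pos hγ0 _
        calc ε ^ 2 * γ ^ j * (1 - γ⁻¹ * γ⁻¹)⁻¹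
            ≤ ε ^ 2 * γ ^ j * (4 / 3) := mul_le_mul_of_nonneg_left hI (by positivity)
          _ = (ε ^ 2 * (4 / 3)) * γ ^ j := by ring
          _ ≤ (ε ^ 2 * (4 / 3)) * γ ^ (θ * (j : ℝ)) :=
              mul_le_mul_of_nonneg_left hAB (by positivity)
          _ ≤ ε * γ ^ (θ * (j : ℝ)) := mul_le_mul_of_nonneg_right (by nlinarith) hB0.le

lemma TzMap_lip (γ ε : ℝ) (hγ : 2 ≤ γ) (hε0 : 0 < ε) (hε : ε ≤ 1 / 4)
    (N : ℕ) (β : ℤ → (ℤ → ℝ) → ℝ) (ν ν' : ℤ → ℝ) (d : ℝ) (hd : 0 ≤ d)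
    (hD : ∀ k : ℤ, -(N : ℤ) + 1 ≤ k → k ≤ 0 → |β k ν - β k ν'| ≤ ε ^ 2 * d)
    (j : ℤ) (hj1 : -(N : ℤ) ≤ j) (hj2 : j ≤ 0) :
    |TzMap γ N β ν j - TzMap γ N β ν' j| ≤ 1 / 8 * d := by
  have hγ0 : (0 : ℝ) < γ := by linarith
  have hγ0' : γ ≠ 0 := hγ0.ne'
  have hinv : γ⁻¹ ≤ 1 / 2 := my_inv_le hγ0 (by linarith)
  have hinv0 : 0 ≤ γ⁻¹ := by positivity
  rw [TzMap, TzMap, if_pos ⟨hj1, hj2⟩, if_pos ⟨hj1, hj2⟩]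
  rw [neg_sub_neg, ← Finset.sum_sub_distrib]
  have hterm : ∀ k ∈ Finset.Icc (-(N : ℤ) + 1) j,
      |γ ^ (k - j) * β k ν' - γ ^ (k - j) * β k ν| ≤ (ε ^ 2 * d) * γ⁻¹ ^ (j - k).toNat := by
    intro k hk
    simp only [Finset.mem_Icc] at hk
    have hzp : (0:ℝ) < γ ^ (k - j) := zpow_pos hγ0 _
    rw [← mul_sub, abs_mul, abs_of_pos hzp, zpow_sub_eq γ hγ0' hk.2, abs_sub_comm]
    calc γ⁻¹ ^ (j - k).toNat * |β k ν - β k ν'|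
        ≤ γ⁻¹ ^ (j - k).toNat * (ε ^ 2 * d) :=
          mul_le_mul_of_nonneg_left (hD k hk.1 (le_trans hk.2 hj2)) (by positivity)
      _ = (ε ^ 2 * d) * γ⁻¹ ^ (j - k).toNat := mul_comm _ _
  calc |∑ k ∈ Finset.Icc (-(N : ℤ) + 1) j, (γ ^ (k - j) * β k ν' - γ ^ (k - j) * β k ν)|
      ≤ ∑ k ∈ Finset.Icc (-(N : ℤ) + 1) j,
          |γ ^ (k - j) * β k ν' - γ ^ (k - j) * β k ν| := Finset.abs_sum_le_sum_abs _ _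
    _ ≤ ∑ k ∈ Finset.Icc (-(N : ℤ) + 1) j, (ε ^ 2 * d) * γ⁻¹ ^ (j - k).toNat :=
        Finset.sum_le_sum hterm
    _ = (ε ^ 2 * d) * ∑ k ∈ Finset.Icc (-(N : ℤ) + 1) j, γ⁻¹ ^ (j - k).toNat := by
        rw [Finset.mul_sum]
    _ ≤ (ε ^ 2 * d) * (1 - γ⁻¹)⁻¹ := by
        refine mul_le_mul_of_nonneg_left ?_ (by positivity)
        exact geomIcc_le _ hinv0 (by linarith) _ _
    _ ≤ 1 / 8 * d := by
        have hI : (1 - γ⁻¹)⁻¹ ≤ 2 := my_inv_le (by linarith) (by linarith)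
        have s1 : ε ^ 2 * d * (1 - γ⁻¹)⁻¹ ≤ ε ^ 2 * d * 2 :=
          mul_le_mul_of_nonneg_left hI (by positivity)
        have s2 : ε ^ 2 ≤ 1 / 16 := by nlinarith
        have s3 : ε ^ 2 * d ≤ 1 / 16 * d := mul_le_mul_of_nonneg_right s2 hd
        linarith

/-- Existence and uniqueness of the exponentially decaying solution of the
renormalization-group recursion for the relevant running coupling constant, with vanishing
datum on the last (infrared) scale. -/
theorem stmt9
    (γ θ : ℝ) (hγ : 2 ≤ γ) (hθ0 : 0 < θ) (hθ1 : θ < 1)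
    (N : ℕ) (hN : 1 ≤ N) (ε : ℝ) (hε0 : 0 < ε) (hε : ε ≤ 1 / 4)
    (β : ℤ → (ℤ → ℝ) → ℝ)
    (hloc : ∀ j : ℤ, -(N : ℤ) + 1 ≤ j → j ≤ 0 → ∀ ν ν' : ℤ → ℝ,
      (∀ k : ℤ, j ≤ k → k ≤ 0 → -(N : ℤ) ≤ k → ν k = ν' k) → β j ν = β j ν')
    (hsmall : ∀ j : ℤ, -(N : ℤ) + 1 ≤ j → j ≤ 0 → ∀ ν : ℤ → ℝ,
      (∀ k : ℤ, -(N : ℤ) ≤ k → k ≤ 0 → |ν k| ≤ ε * γ ^ (θ * (k : ℝ))) →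
      |β j ν| ≤ ε ^ 2 * γ ^ ((j : ℝ)))
    (hlip : ∀ j : ℤ, -(N : ℤ) + 1 ≤ j → j ≤ 0 → ∀ ν ν' : ℤ → ℝ,
      (∀ k : ℤ, -(N : ℤ) ≤ k → k ≤ 0 → |ν k| ≤ ε * γ ^ (θ * (k : ℝ))) →
      (∀ k : ℤ, -(N : ℤ) ≤ k → k ≤ 0 → |ν' k| ≤ ε * γ ^ (θ * (k : ℝ))) →
      ∀ d : ℝ, (∀ k : ℤ, -(N : ℤ) ≤ k → k ≤ 0 → |ν k - ν' k| ≤ d) →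
        |β j ν - β j ν'| ≤ ε ^ 2 * d) :
    ∃! ν : ℤ → ℝ,
      (∀ k : ℤ, (k < -(N : ℤ) ∨ 0 < k) → ν k = 0) ∧
      (∀ k : ℤ, -(N : ℤ) ≤ k → k ≤ 0 → |ν k| ≤ ε * γ ^ (θ * (k : ℝ))) ∧
      ν (-(N : ℤ)) = 0 ∧
      (∀ j : ℤ, -(N : ℤ) ≤ j → j ≤ -1 → ν j = γ * ν (j + 1) + γ * β (j + 1) ν) := by
  classical
  have hγ0 : (0 : ℝ) < γ := by linarith
  have hγ0' : γ ≠ 0 := hγ0.ne'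
  -- extension of a finite vector to a function on ℤ
  set ex : (Fin (N + 1) → ℝ) → ℤ → ℝ := fun x k =>
    if h : -(N : ℤ) ≤ k ∧ k ≤ 0 then x ⟨(k + N).toNat, by omega⟩ else 0 with hex
  have hext_zero : ∀ (x : Fin (N + 1) → ℝ) (k : ℤ), ¬(-(N : ℤ) ≤ k ∧ k ≤ 0) → ex x k = 0 :=
    fun x k h => dif_neg h
  have hext_eval : ∀ (x : Fin (N + 1) → ℝ) (k : ℤ) (h : -(N : ℤ) ≤ k ∧ k ≤ 0),
      ex x k = x ⟨(k + N).toNat, by omega⟩ := fun x k h => dif_pos h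
  have hcast : ∀ (k : ℤ), -(N : ℤ) ≤ k → k ≤ 0 →
      ((((k + N).toNat : ℕ) : ℝ) - (N : ℝ)) = (k : ℝ) := by
    intro k h1 h2
    have h3 : (((k + N).toNat : ℕ) : ℤ) = k + N := Int.toNat_of_nonneg (by omega)
    have h4 : (((k + N).toNat : ℕ) : ℝ) = ((k : ℝ) + (N : ℝ)) := by
      exact_mod_cast congrArg (fun z : ℤ => (z : ℝ)) h3
    rw [h4]; ring
  -- the invariant ball
  set S : Set (Fin (N + 1) → ℝ) :=
    {x | ∀ i : Fin (N + 1), |x i| ≤ ε * γ ^ (θ * (((i : ℕ) : ℝ) - (N : ℝ)))} with hS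
  have hSball : ∀ x ∈ S, ∀ k : ℤ, -(N : ℤ) ≤ k → k ≤ 0 →
      |ex x k| ≤ ε * γ ^ (θ * (k : ℝ)) := by
    intro x hx k h1 h2
    rw [hext_eval x k ⟨h1, h2⟩]
    calc |x ⟨(k + N).toNat, by omega⟩|
        ≤ ε * γ ^ (θ * ((((k + N).toNat : ℕ) : ℝ) - (N : ℝ))) := hx _
      _ = ε * γ ^ (θ * (k : ℝ)) := by rw [hcast k h1 h2]
  have hSclosed : IsClosed S := by
    have hrw : S = ⋂ i : Fin (N + 1),
        {x : Fin (N + 1) → ℝ | |x i| ≤ ε * γ ^ (θ * (((i : ℕ) : ℝ) - (N : ℝ)))} := by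
      ext x
      simp only [hS, Set.mem_setOf_eq, Set.mem_iInter]
    rw [hrw]
    exact isClosed_iInter fun i =>
      isClosed_le (Continuous.abs (continuous_apply i)) continuous_const
  haveI hcompl : CompleteSpace S := hSclosed.completeSpace_coe
  haveI hnonem : Nonempty S := ⟨⟨0, by
    intro i
    simp only [Pi.zero_apply, abs_zero]
    positivity⟩⟩
  -- the fixed-point map
  have hBz : ∀ (w : ℤ → ℝ), (∀ k : ℤ, -(N : ℤ) ≤ k → k ≤ 0 → |w k| ≤ ε * γ ^ (θ * (k : ℝ))) →
      ∀ k : ℤ, -(N : ℤ) + 1 ≤ k → k ≤ 0 → |β k w| ≤ ε ^ 2 * γ ^ k := by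
    intro w hw k h1 h2
    have h3 := hsmall k h1 h2 w hw
    rwa [Real.rpow_intCast γ k] at h3
  have hFmem : ∀ x : S,
      (fun i : Fin (N + 1) => TzMap γ N β (ex x.1) (((i : ℕ) : ℤ) - N)) ∈ S := by
    intro x i
    have hlt := i.isLt
    have h1 : -(N : ℤ) ≤ ((i : ℕ) : ℤ) - N := by omega
    have h2 : ((i : ℕ) : ℤ) - N ≤ 0 := by omega
    have hb := TzMap_bound γ θ ε hγ hθ0 hθ1 hε0 hε N β (ex x.1)
      (hBz (ex x.1) (hSball x.1 x.2)) (((i : ℕ) : ℤ) - N) h1 h2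
    have hcast2 : (((((i : ℕ) : ℤ) - N : ℤ)) : ℝ) = ((i : ℕ) : ℝ) - (N : ℝ) := by
      push_cast; ring
    rwa [hcast2] at hb
  set F : S → S := fun x =>
    ⟨fun i : Fin (N + 1) => TzMap γ N β (ex x.1) (((i : ℕ) : ℤ) - N), hFmem x⟩ with hF
  have hcontr : ContractingWith (8⁻¹ : NNReal) F := by
    constructor
    · rw [← NNReal.coe_lt_coe]
      norm_num
    · apply LipschitzWith.of_dist_le_mul
      intro x y
      have hc : ((8⁻¹ : NNReal) : ℝ) = 1 / 8 := by norm_num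
      rw [Subtype.dist_eq, dist_pi_le_iff (by rw [hc]; positivity)]
      intro i
      rw [Real.dist_eq, hc]
      have hlt := i.isLt
      have h1 : -(N : ℤ) ≤ ((i : ℕ) : ℤ) - N := by omega
      have h2 : ((i : ℕ) : ℤ) - N ≤ 0 := by omega
      have hdist : ∀ k : ℤ, -(N : ℤ) ≤ k → k ≤ 0 → |ex x.1 k - ex y.1 k| ≤ dist x y := by
        intro k hk1 hk2
        rw [hext_eval x.1 k ⟨hk1, hk2⟩, hext_eval y.1 k ⟨hk1, hk2⟩, ← Real.dist_eq]
        calc dist (x.1 ⟨(k + N).toNat, by omega⟩) (y.1 ⟨(k + N).toNat, by omega⟩)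
            ≤ dist x.1 y.1 := dist_le_pi_dist x.1 y.1 _
          _ = dist x y := (Subtype.dist_eq x y).symm
      have hD := fun k hk1 hk2 => hlip k hk1 hk2 (ex x.1) (ex y.1)
        (hSball x.1 x.2) (hSball y.1 y.2) (dist x y) hdist
      exact TzMap_lip γ ε hγ hε0 hε N β (ex x.1) (ex y.1) (dist x y) dist_nonneg hD
        (((i : ℕ) : ℤ) - N) h1 h2
  set xs : S := ContractingWith.fixedPoint F hcontr with hxs
  have hfix : F xs = xs := hcontr.fixedPoint_isFixedPt
  set ν : ℤ → ℝ := ex xs.1 with hν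
  have hfixall : ∀ k : ℤ, TzMap γ N β ν k = ν k := by
    intro k
    by_cases h : -(N : ℤ) ≤ k ∧ k ≤ 0
    · have hlt : (k + N).toNat < N + 1 := by omega
      have hik : ((((⟨(k + N).toNat, hlt⟩ : Fin (N + 1)) : ℕ)) : ℤ) - N = k := by
        simp only []
        omega
      calc TzMap γ N β ν k
          = TzMap γ N β ν ((((⟨(k + N).toNat, hlt⟩ : Fin (N + 1)) : ℕ) : ℤ) - N) := by
            rw [hik]
        _ = xs.1 ⟨(k + N).toNat, hlt⟩ :=
            congrFun (congrArg Subtype.val hfix) ⟨(k + N).toNat, hlt⟩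
        _ = ν k := (hext_eval xs.1 k h).symm
    · rw [TzMap_out γ N β ν k h]
      exact (hext_zero xs.1 k h).symm
  have P1 : ∀ k : ℤ, (k < -(N : ℤ) ∨ 0 < k) → ν k = 0 := fun k hk =>
    hext_zero xs.1 k (by omega)
  have P2 : ∀ k : ℤ, -(N : ℤ) ≤ k → k ≤ 0 → |ν k| ≤ ε * γ ^ (θ * (k : ℝ)) :=
    hSball xs.1 xs.2
  have P3 : ν (-(N : ℤ)) = 0 := by
    rw [← hfixall]
    exact TzMap_bot γ N hN β ν
  have P4 : ∀ j : ℤ, -(N : ℤ) ≤ j → j ≤ -1 → ν j = γ * ν (j + 1) + γ * β (j + 1) ν := by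
    intro j h1 h2
    rw [← hfixall j, ← hfixall (j + 1)]
    exact TzMap_step γ hγ0' N β ν j h1 h2
  refine ⟨ν, ⟨P1, P2, P3, P4⟩, ?_⟩
  rintro w ⟨h0', hb', hbot', hrec'⟩
  have hfixw : ∀ k : ℤ, TzMap γ N β w k = w k := by
    have main : ∀ m : ℕ, m ≤ N → w (-(N : ℤ) + m) = TzMap γ N β w (-(N : ℤ) + m) := by
      intro m
      induction m with
      | zero =>
        intro _
        simp only [Nat.cast_zero, add_zero]
        rw [hbot', TzMap_bot γ N hN β w]
      | succ n ih =>
        intro hm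
        have ihn := ih (by omega)
        have hj1 : -(N : ℤ) ≤ -(N : ℤ) + n := by omega
        have hj2 : -(N : ℤ) + n ≤ -1 := by omega
        have hstep := TzMap_step γ hγ0' N β w (-(N : ℤ) + n) hj1 hj2
        have hre := hrec' (-(N : ℤ) + n) hj1 hj2
        have hcan : γ * w (-(N : ℤ) + n + 1) = γ * TzMap γ N β w (-(N : ℤ) + n + 1) := by
          linarith [ihn, hstep, hre]
        have hcc := mul_left_cancel₀ hγ0' hcan
        have hc2 : -(N : ℤ) + ((n + 1 : ℕ) : ℤ) = -(N : ℤ) + n + 1 := by push_cast; ring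
        rw [hc2]
        exact hcc
    intro k
    by_cases h : -(N : ℤ) ≤ k ∧ k ≤ 0
    · have hmain := main (k + N).toNat (by omega)
      rw [show -(N : ℤ) + ((k + N).toNat : ℤ) = k by omega] at hmain
      exact hmain.symm
    · rw [TzMap_out γ N β w k h, h0' k (by omega)]
  have hne2 : (Finset.Icc (-(N : ℤ)) 0).Nonempty :=
    ⟨-(N : ℤ), Finset.mem_Icc.mpr ⟨le_rfl, by omega⟩⟩
  set D : ℝ := (Finset.Icc (-(N : ℤ)) 0).sup' hne2 (fun k => |w k - ν k|) with hDdef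
  have hcoord : ∀ k : ℤ, -(N : ℤ) ≤ k → k ≤ 0 → |w k - ν k| ≤ D := by
    intro k h1 h2
    rw [hDdef]
    exact Finset.le_sup' (fun k : ℤ => |w k - ν k|) (Finset.mem_Icc.mpr ⟨h1, h2⟩)
  have hD0 : 0 ≤ D := le_trans (abs_nonneg _) (hcoord (-(N : ℤ)) le_rfl (by omega))
  have hβD : ∀ k : ℤ, -(N : ℤ) + 1 ≤ k → k ≤ 0 → |β k w - β k ν| ≤ ε ^ 2 * D :=
    fun k h1 h2 => hlip k h1 h2 w ν hb' P2 D hcoord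
  have hstepD : ∀ j ∈ Finset.Icc (-(N : ℤ)) 0, |w j - ν j| ≤ 1 / 8 * D := by
    intro j hj
    rw [Finset.mem_Icc] at hj
    rw [← hfixw j, ← hfixall j]
    exact TzMap_lip γ ε hγ hε0 hε N β w ν D hD0 hβD j hj.1 hj.2
  have hDD : D ≤ 1 / 8 * D := Finset.sup'_le hne2 _ hstepD
  have hDzero : D = 0 := by linarith
  funext k
  by_cases h : -(N : ℤ) ≤ k ∧ k ≤ 0
  · have h1 := hcoord k h.1 h.2
    rw [hDzero] at h1
    have h2 : |w k - ν k| = 0 := le_antisymm h1 (abs_nonneg _)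
    have := abs_eq_zero.mp h2
    linarith [this]
  · rw [h0' k (by omega), P1 k (by omega)]
end

section
/- For every integer r ≥ 3 there exists C_r > 0 such that for every θ ∈ (0,1], every integer L₁ ≥ 1 with θL₁ ≥ 1, and every q ∈ ℝ: (1/(θL₁)) Σ_{j=0}^{L₁−1} (1 + (|2πj/L₁|_T/θ)^r)^{-1} (1 + (|2πj/L₁ − q|_T/θ)^r)^{-1} ≤ C_r (θ/(θ + |q|_T))^{r/2}. -/
noncomputable section

/-!
Since `|q|_T ≤ |x|_T + |x - q|_T`, one of the two distances is at least `|q|_T / 2`, so with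
`f(t) = (1 + (t/θ)^r)⁻¹` each summand is at most `f(|q|_T / 2) (f(|x|_T) + f(|x - q|_T))`.
A torus ball of radius `s` contains at most `s L₁ / π + 1` points of the discrete Brillouin zone;
sorting the points into dyadic shells `2^(k-1) θ ≤ t < 2^k θ` then bounds each one-bump sum by
`16 θ L₁` as soon as `r ≥ 2`. Finally `f(|q|_T / 2) ≤ 4^r (θ / (θ + |q|_T))^r`.
-/

open Finset Real

lemma torusDist_nonneg (x : ℝ) : 0 ≤ torusDist x :=
  le_ciInf fun _ => abs_nonneg _

lemma torusDist_le (x : ℝ) (n : ℤ) : torusDist x ≤ |x + n * (2 * π)| :=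
  ciInf_le ⟨0, by rintro _ ⟨m, rfl⟩; positivity⟩ n

lemma torusDist_le_add_sub (x q : ℝ) : torusDist q ≤ torusDist x + torusDist (x - q) := by
  rw [← sub_le_iff_le_add']
  refine le_ciInf fun m => ?_
  rw [sub_le_iff_le_add', ← sub_le_iff_le_add]
  refine le_ciInf fun n => ?_
  rw [sub_le_iff_le_add]
  calc torusDist q ≤ |q + ((n - m : ℤ) : ℝ) * (2 * π)| := torusDist_le q (n - m)
    _ = |(x + n * (2 * π)) - (x - q + m * (2 * π))| := by push_cast; ring_nf
    _ ≤ |x + n * (2 * π)| + |x - q + m * (2 * π)| := abs_sub _ _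

lemma card_Icc_ceil_floor_le {a b : ℝ} (hab : a ≤ b) : (#(Icc ⌈a⌉ ⌊b⌋) : ℝ) ≤ b - a + 1 := by
  have hle : ⌈a⌉ ≤ ⌊b⌋ + 1 := (Int.ceil_mono hab).trans (Int.ceil_le_floor_add_one b)
  rw [Int.card_Icc, ← Int.cast_natCast, Int.toNat_of_nonneg (by omega)]
  push_cast
  linarith [Int.le_ceil a, Int.floor_le b]

lemma card_filter_torusDist_lt (L : ℕ) (c : ℝ) {s : ℝ} (hs : 0 ≤ s) :
    (#{j ∈ range L | torusDist (2 * π * ((j : ℕ) : ℝ) / L - c) < s} : ℝ) ≤ s * L / π + 1 := by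
  rcases L.eq_zero_or_pos with rfl | hL
  · simp
  set a := c * L / (2 * π) with ha
  set ρ := s * L / (2 * π) with hρ
  have hL' : (0 : ℝ) < L := by exact_mod_cast hL
  -- Unwrapping the torus, `j` is the residue mod `L` of an integer within `ρ` of `a`.
  have hsub : {j ∈ range L | torusDist (2 * π * ((j : ℕ) : ℝ) / L - c) < s} ⊆
      (Icc ⌈a - ρ⌉ ⌊a + ρ⌋).image fun m : ℤ => (m % L).toNat := by
    intro j hj
    obtain ⟨hjL, hjs⟩ := mem_filter.1 hj
    obtain ⟨n, hn⟩ := exists_lt_of_ciInf_lt hjs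
    have hscale : ((j + n * L : ℤ) : ℝ) - a =
        (2 * π * (j : ℝ) / L - c + n * (2 * π)) * (L / (2 * π)) := by
      rw [ha]; push_cast; field_simp; ring
    have hdist : |((j + n * L : ℤ) : ℝ) - a| < ρ := by
      rw [hscale, abs_mul, abs_of_pos (show (0 : ℝ) < L / (2 * π) by positivity)]
      exact (mul_lt_mul_of_pos_right hn (by positivity)).trans_eq (by rw [hρ]; ring)
    rw [abs_lt] at hdist
    refine mem_image.2 ⟨j + n * L,
      mem_Icc.2 ⟨Int.ceil_le.2 (by linarith), Int.le_floor.2 (by linarith)⟩, ?_⟩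
    rw [Int.add_mul_emod_self_right, Int.emod_eq_of_lt (by omega) (by simpa using hjL)]
    simp
  calc (#{j ∈ range L | torusDist (2 * π * ((j : ℕ) : ℝ) / L - c) < s} : ℝ)
      ≤ #(Icc ⌈a - ρ⌉ ⌊a + ρ⌋) := by exact_mod_cast (card_le_card hsub).trans card_image_le
    _ ≤ (a + ρ) - (a - ρ) + 1 := card_Icc_ceil_floor_le (by linarith [show 0 ≤ ρ by positivity])
    _ = s * L / π + 1 := by rw [hρ]; field_simp; ring

def bump (r : ℕ) (θ x : ℝ) : ℝ := (1 + (x / θ) ^ r)⁻¹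

section Bump

variable {r : ℕ} {θ : ℝ}

lemma bump_nonneg (hθ : 0 < θ) {x : ℝ} (hx : 0 ≤ x) : 0 ≤ bump r θ x := by
  unfold bump; positivity

lemma bump_le_one (hθ : 0 < θ) {x : ℝ} (hx : 0 ≤ x) : bump r θ x ≤ 1 :=
  inv_le_one_of_one_le₀ (le_add_of_nonneg_right (by positivity))

lemma bump_le_bump (hθ : 0 < θ) {x y : ℝ} (hx : 0 ≤ x) (hxy : x ≤ y) :
    bump r θ y ≤ bump r θ x :=
  inv_anti₀ (by positivity) (by gcongr)

lemma bump_le_quarter_pow (hr : 2 ≤ r) (hθ : 0 < θ) {k : ℕ} {x : ℝ} (hx : 2 ^ k * θ ≤ x) :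
    bump r θ x ≤ (1 / 4) ^ k := by
  have hkx : (2 : ℝ) ^ k ≤ x / θ := (le_div_iff₀ hθ).2 hx
  have h4 : (4 : ℝ) ^ k ≤ (x / θ) ^ r :=
    calc (4 : ℝ) ^ k = (2 ^ k) ^ 2 := by rw [← pow_mul, mul_comm, pow_mul]; norm_num
      _ ≤ (2 ^ k) ^ r := pow_le_pow_right₀ (one_le_pow₀ one_le_two) hr
      _ ≤ (x / θ) ^ r := by gcongr
  rw [one_div, inv_pow]
  exact inv_anti₀ (by positivity) (by linarith)

lemma bump_le_dyadic_sum (hr : 2 ≤ r) (hθ : 0 < θ) {x : ℝ} (hx : 0 ≤ x) {K : ℕ}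
    (hK : x < 2 ^ K * θ) :
    bump r θ x ≤ 4 * ∑ k ∈ range (K + 1), if x < 2 ^ k * θ then (1 / 4 : ℝ) ^ k else 0 := by
  classical
  have hex : ∃ k : ℕ, x < 2 ^ k * θ := ⟨K, hK⟩
  have hfirst : bump r θ x ≤ 4 * (1 / 4) ^ Nat.find hex := by
    rcases h : Nat.find hex with _ | k
    · linarith [bump_le_one (r := r) hθ hx]
    · have hkx : 2 ^ k * θ ≤ x := not_lt.1 (Nat.find_min hex (by omega))
      calc bump r θ x ≤ (1 / 4) ^ k := bump_le_quarter_pow hr hθ hkx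
        _ = 4 * (1 / 4) ^ (k + 1) := by ring
  calc bump r θ x
        ≤ 4 * (if x < 2 ^ Nat.find hex * θ then (1 / 4 : ℝ) ^ Nat.find hex else 0) := by
        rwa [if_pos (Nat.find_spec hex)]
    _ ≤ 4 * ∑ k ∈ range (K + 1), if x < 2 ^ k * θ then (1 / 4 : ℝ) ^ k else 0 := by
        gcongr
        refine single_le_sum (f := fun k => if x < 2 ^ k * θ then (1 / 4 : ℝ) ^ k else 0)
          (fun k _ => by positivity) (mem_range.2 (Nat.lt_succ_of_le (Nat.find_min' hex hK)))

lemma sum_bump_le_of_card_lt_le {ι : Type*} (s : Finset ι) (t : ι → ℝ) (ht : ∀ j ∈ s, 0 ≤ t j)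
    (hr : 2 ≤ r) (hθ : 0 < θ) {A B : ℝ} (hA : 0 ≤ A)
    (hcount : ∀ u, 0 ≤ u → (#{j ∈ s | t j < u} : ℝ) ≤ A * u + B) :
    ∑ j ∈ s, bump r θ (t j) ≤ 8 * (A * θ + B) := by
  classical
  have hB : 0 ≤ B := by simpa using (Nat.cast_nonneg _).trans (hcount 0 le_rfl)
  obtain ⟨M, hM⟩ := (s.image t).bddAbove
  obtain ⟨K, hK⟩ := pow_unbounded_of_one_lt (M / θ) one_lt_two
  have htK : ∀ j ∈ s, t j < 2 ^ K * θ := fun j hj =>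
    (hM (mem_image_of_mem t hj)).trans_lt ((div_lt_iff₀ hθ).1 hK)
  have hlayer : ∀ k, (#{j ∈ s | t j < 2 ^ k * θ} : ℝ) * (1 / 4) ^ k ≤ (A * θ + B) * (1 / 2) ^ k :=
    fun k => by
      have h4 : (1 / 4 : ℝ) ^ k = (1 / 2) ^ k * (1 / 2) ^ k := by rw [← mul_pow]; norm_num
      have h2 : (2 : ℝ) ^ k * (1 / 2) ^ k = 1 := by rw [← mul_pow]; norm_num
      have hle : (1 / 2 : ℝ) ^ k ≤ 1 := pow_le_one₀ (by norm_num) (by norm_num)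
      calc (#{j ∈ s | t j < 2 ^ k * θ} : ℝ) * (1 / 4) ^ k
          ≤ (A * (2 ^ k * θ) + B) * ((1 / 2) ^ k * (1 / 2) ^ k) := by
            rw [h4]; gcongr; exact hcount _ (by positivity)
        _ = (A * θ + B * (1 / 2) ^ k) * (1 / 2) ^ k := by
            linear_combination A * θ * (1 / 2) ^ k * h2
        _ ≤ (A * θ + B) * (1 / 2) ^ k := by gcongr; nlinarith
  calc ∑ j ∈ s, bump r θ (t j)
      ≤ ∑ j ∈ s, 4 * ∑ k ∈ range (K + 1), if t j < 2 ^ k * θ then (1 / 4 : ℝ) ^ k else 0 :=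
        sum_le_sum fun j hj => bump_le_dyadic_sum hr hθ (ht j hj) (htK j hj)
    _ = 4 * ∑ k ∈ range (K + 1), (#{j ∈ s | t j < 2 ^ k * θ} : ℝ) * (1 / 4) ^ k := by
        rw [← mul_sum, sum_comm]
        simp only [← sum_filter, sum_const, nsmul_eq_mul]
    _ ≤ 4 * ∑ k ∈ range (K + 1), (A * θ + B) * (1 / 2) ^ k :=
        mul_le_mul_of_nonneg_left (sum_le_sum fun k _ => hlayer k) (by norm_num)
    _ ≤ 4 * ((A * θ + B) * 2) := by rw [← mul_sum]; gcongr; exact sum_geometric_two_le _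
    _ = 8 * (A * θ + B) := by ring

lemma sum_bump_torusDist_le (hr : 2 ≤ r) (hθ : 0 < θ) {L : ℕ} (hθL : 1 ≤ θ * L) (c : ℝ) :
    ∑ j ∈ range L, bump r θ (torusDist (2 * π * j / L - c)) ≤ 16 * (θ * L) := by
  have hsum := sum_bump_le_of_card_lt_le (range L) (fun j : ℕ => torusDist (2 * π * j / L - c))
    (fun j _ => torusDist_nonneg _) hr hθ (A := L / π) (B := 1) (by positivity)
    (fun u hu => (card_filter_torusDist_lt L c hu).trans_eq (by ring))
  have hπ : L / π * θ ≤ θ * L := by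
    rw [div_mul_eq_mul_div, div_le_iff₀ pi_pos, mul_comm (L : ℝ)]
    exact le_mul_of_one_le_right (by positivity) (by linarith [pi_gt_three])
  linarith

lemma bump_mul_bump_le (hθ : 0 < θ) {a b Q : ℝ} (ha : 0 ≤ a) (hb : 0 ≤ b) (hQ : 0 ≤ Q)
    (hQab : Q ≤ a + b) :
    bump r θ a * bump r θ b ≤ bump r θ (Q / 2) * (bump r θ a + bump r θ b) := by
  have hQ2 : 0 ≤ Q / 2 := by positivity
  have hna := bump_nonneg (r := r) hθ ha
  have hnb := bump_nonneg (r := r) hθ hb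
  rcases le_total (Q / 2) a with h | h
  · nlinarith [bump_le_bump (r := r) hθ hQ2 h]
  · nlinarith [bump_le_bump (r := r) hθ hQ2 (show Q / 2 ≤ b by linarith)]

lemma bump_half_le (hθ : 0 < θ) {Q : ℝ} (hQ : 0 ≤ Q) :
    bump r θ (Q / 2) ≤ 4 ^ r * (θ / (θ + Q)) ^ r := by
  set u := Q / 2 / θ with hu
  have hu0 : 0 ≤ u := by positivity
  have hpow : (1 + u) ^ r ≤ 2 ^ r * (1 + u ^ r) := by
    refine (add_pow_le zero_le_one hu0 r).trans ?_
    rw [one_pow]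
    gcongr
    exacts [one_le_two, Nat.sub_le r 1]
  have hbase : 2 / (1 + u) ≤ 4 * (θ / (θ + Q)) := by
    rw [hu, div_le_iff₀ (by positivity)]
    field_simp
    nlinarith
  calc bump r θ (Q / 2) ≤ (2 / (1 + u)) ^ r := by
        rw [div_pow, le_div_iff₀ (by positivity), bump, inv_mul_le_iff₀ (by positivity)]
        linarith
    _ ≤ (4 * (θ / (θ + Q))) ^ r := by gcongr
    _ = 4 ^ r * (θ / (θ + Q)) ^ r := mul_pow _ _ _

lemma sum_bump_mul_bump_le (hr : 2 ≤ r) (hθ : 0 < θ) {L : ℕ} (hθL : 1 ≤ θ * L) (q : ℝ) :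
    ∑ j ∈ range L, bump r θ (torusDist (2 * π * j / L)) * bump r θ (torusDist (2 * π * j / L - q))
      ≤ 32 * (θ * L) * bump r θ (torusDist q / 2) := by
  set x : ℕ → ℝ := fun j => 2 * π * j / L
  have hpair : ∀ j ∈ range L, bump r θ (torusDist (x j)) * bump r θ (torusDist (x j - q)) ≤
      bump r θ (torusDist q / 2) * (bump r θ (torusDist (x j)) + bump r θ (torusDist (x j - q))) :=
    fun j _ => bump_mul_bump_le hθ (torusDist_nonneg _) (torusDist_nonneg _) (torusDist_nonneg q)
      (torusDist_le_add_sub _ q)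
  have hsum₀ : ∑ j ∈ range L, bump r θ (torusDist (x j)) ≤ 16 * (θ * L) := by
    simpa using sum_bump_torusDist_le hr hθ hθL 0
  have hsum_q := sum_bump_torusDist_le hr hθ hθL q
  have hQ : 0 ≤ bump r θ (torusDist q / 2) := bump_nonneg hθ (by linarith [torusDist_nonneg q])
  calc ∑ j ∈ range L, bump r θ (torusDist (x j)) * bump r θ (torusDist (x j - q))
      ≤ bump r θ (torusDist q / 2) * (∑ j ∈ range L, bump r θ (torusDist (x j)) +
          ∑ j ∈ range L, bump r θ (torusDist (x j - q))) := by
        rw [← sum_add_distrib, mul_sum]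
        exact sum_le_sum hpair
    _ ≤ bump r θ (torusDist q / 2) * (16 * (θ * L) + 16 * (θ * L)) := by gcongr
    _ = 32 * (θ * L) * bump r θ (torusDist q / 2) := by ring

end Bump

/-- Riemann-sum estimate for the overlap of two momentum-space bumps of
width `θ`, centered at `0` and at `q`, over the discrete Brillouin zone. -/
theorem stmt11 (r : ℕ) (hr : 3 ≤ r) :
    ∃ C > 0, ∀ (θ : ℝ) (L₁ : ℕ), 0 < θ → θ ≤ 1 → 1 ≤ L₁ → 1 ≤ θ * (L₁ : ℝ) → ∀ q : ℝ,
      (1 / (θ * (L₁ : ℝ))) *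
          ∑ j ∈ Finset.range L₁,
            (1 + (torusDist (2 * Real.pi * (j : ℝ) / (L₁ : ℝ)) / θ) ^ r)⁻¹ *
              (1 + (torusDist (2 * Real.pi * (j : ℝ) / (L₁ : ℝ) - q) / θ) ^ r)⁻¹ ≤
        C * (θ / (θ + torusDist q)) ^ ((r : ℝ) / 2) := by
  refine ⟨32 * 4 ^ r, by positivity, fun θ L₁ hθ _ _ hθL q => ?_⟩
  have hQ := torusDist_nonneg q
  have hX : (θ / (θ + torusDist q)) ^ r ≤ (θ / (θ + torusDist q)) ^ ((r : ℝ) / 2) := by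
    rw [← rpow_natCast]
    exact rpow_le_rpow_of_exponent_ge (by positivity) ((div_le_one (by positivity)).2 (by linarith))
      (by linarith [(Nat.cast_nonneg r : (0 : ℝ) ≤ r)])
  calc (1 / (θ * L₁)) * ∑ j ∈ range L₁,
        bump r θ (torusDist (2 * π * j / L₁)) * bump r θ (torusDist (2 * π * j / L₁ - q))
      ≤ (1 / (θ * L₁)) * (32 * (θ * L₁) * bump r θ (torusDist q / 2)) := by
        gcongr
        exact sum_bump_mul_bump_le (by omega) hθ hθL q
    _ = 32 * bump r θ (torusDist q / 2) := by field_simp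
    _ ≤ 32 * 4 ^ r * (θ / (θ + torusDist q)) ^ ((r : ℝ) / 2) := by
        rw [mul_assoc]
        gcongr
        exact (bump_half_le hθ hQ).trans (mul_le_mul_of_nonneg_left hX (by positivity))

end
end

section
/- Let d ∈ ℕ, β > 0, and let K, A, B be d×d complex matrices with K Hermitian. Define the Gibbs expectation ⟨X⟩ := Tr(X e^{-βK})/Tr(e^{-βK}), the imaginary-time evolution γ_s(A) := e^{sK} A e^{-sK}, and the time-ordered correlation F_X : [−β/2, β/2] → ℂ by F_X(s) := ⟨γ_s(X)B⟩ for s ∈ [0, β/2] and F_X(s) := ⟨B γ_s(X)⟩ for s ∈ [−β/2, 0). Then for every η ∈ (2π/β)ℤ: η ∫_{-β/2}^{β/2} e^{-iηs} F_A(s) ds = −i ∫_{-β/2}^{β/2} e^{-iηs} F_{[K,A]}(s) ds − i⟨[A,B]⟩, where [X,Y] := XY − YX. -/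
noncomputable section

/-- The Gibbs expectation `⟨X⟩ = Tr(X e^{-βK}) / Tr(e^{-βK})`. -/
def gibbsExp {d : ℕ} (β : ℝ) (K X : Matrix (Fin d) (Fin d) ℂ) : ℂ :=
  (X * NormedSpace.exp ((-(β : ℂ)) • K)).trace / (NormedSpace.exp ((-(β : ℂ)) • K)).trace

/-- The imaginary-time evolution `γ_s(A) = e^{sK} A e^{-sK}`. -/
def imagTimeEv {d : ℕ} (K A : Matrix (Fin d) (Fin d) ℂ) (s : ℝ) : Matrix (Fin d) (Fin d) ℂ :=
  NormedSpace.exp ((s : ℂ) • K) * A * NormedSpace.exp ((-(s : ℂ)) • K)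

/-- The time-ordered correlation `F_X(s)`. -/
def timeOrdered {d : ℕ} (β : ℝ) (K X B : Matrix (Fin d) (Fin d) ℂ) (s : ℝ) : ℂ :=
  if 0 ≤ s then gibbsExp β K (imagTimeEv K X s * B) else gibbsExp β K (B * imagTimeEv K X s)

/-! On `[0, β/2]` and on `[-β/2, 0]` the correlation is smooth, with derivative `F_{[K,A]}`,
so the identity is integration by parts against `e^{-iηs}` on each half. At `s = 0` the two
halves leave `⟨AB⟩ - ⟨BA⟩`, the jump of the time ordering. At `s = ±β/2` they cancel: cyclicity
of the trace gives the KMS condition `⟨γ_s(A) B⟩ = ⟨B γ_{s-β}(A)⟩`, and `ηβ ∈ 2πℤ` makes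
`e^{-iηs}` `β`-periodic. -/

-- Any norm on matrices would do: all of them induce the product topology used above.
attribute [local instance] Matrix.linftyOpNormedRing Matrix.linftyOpNormedAlgebra

open NormedSpace MeasureTheory intervalIntegral

section BanachAlgebra

variable {𝕂 𝔸 : Type*} [RCLike 𝕂] [NormedRing 𝔸] [NormedAlgebra 𝕂 𝔸] [CompleteSpace 𝔸]

theorem exp_smul_mul_exp_smul (K : 𝔸) (u v : 𝕂) :
    exp (u • K) * exp (v • K) = exp ((u + v) • K) := by
  let _ : NormedAlgebra ℚ 𝔸 := NormedAlgebra.restrictScalars ℚ 𝕂 𝔸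
  rw [add_smul, exp_add_of_commute (((Commute.refl K).smul_right v).smul_left u)]

theorem hasDerivAt_exp_smul_mul_mul_exp_neg_smul (K X : 𝔸) (t : 𝕂) :
    HasDerivAt (fun u : 𝕂 => exp (u • K) * X * exp (-u • K))
      (exp (t • K) * (K * X - X * K) * exp (-t • K)) t := by
  have hneg : HasDerivAt (fun u : 𝕂 => exp (-u • K)) (exp (-t • K) * -K) t := by
    simpa only [smul_neg, neg_smul] using hasDerivAt_exp_smul_const (-K) t
  refine (((hasDerivAt_exp_smul_const' K t).mul_const X).mul hneg).congr_deriv ?_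
  rw [mul_neg, ((Commute.refl K).smul_right t).exp_right.eq,
    ← ((Commute.refl K).smul_right (-t)).exp_right.eq]
  noncomm_ring

end BanachAlgebra

theorem intervalIntegral.integral_ite_le_eq_add {E : Type*} [NormedAddCommGroup E]
    [NormedSpace ℝ E] {f g : ℝ → E} {a b c : ℝ} (hac : a ≤ c) (hcb : c ≤ b)
    (hf : IntervalIntegrable f volume a c) (hg : IntervalIntegrable g volume c b) :
    ∫ s in a..b, (if c ≤ s then g s else f s) = (∫ s in a..c, f s) + ∫ s in c..b, g s := by
  have hleft : Set.EqOn f (fun s => if c ≤ s then g s else f s) (Set.uIoo a c) := by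
    intro s hs
    rw [Set.uIoo_of_le hac] at hs
    simp [hs.2.not_ge]
  have hright : Set.EqOn g (fun s => if c ≤ s then g s else f s) (Set.uIoo c b) := by
    intro s hs
    rw [Set.uIoo_of_le hcb] at hs
    simp [hs.1.le]
  rw [← integral_add_adjacent_intervals (hf.congr_uIoo hleft) (hg.congr_uIoo hright),
    integral_congr_uIoo hleft, integral_congr_uIoo hright]

theorem intervalIntegral.mul_integral_cexp_mul_eq_of_hasDerivAt {f f' : ℝ → ℂ} {a b : ℝ}
    (η : ℝ) (hf : ∀ s ∈ Set.uIcc a b, HasDerivAt f (f' s) s)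
    (hf' : IntervalIntegrable f' volume a b) :
    η * ∫ s in a..b, Complex.exp (-Complex.I * η * s) * f s =
      -Complex.I * (∫ s in a..b, Complex.exp (-Complex.I * η * s) * f' s) +
        Complex.I * (Complex.exp (-Complex.I * η * b) * f b -
          Complex.exp (-Complex.I * η * a) * f a) := by
  have hφ (s : ℝ) : HasDerivAt (fun t : ℝ => Complex.exp (-Complex.I * η * t))
      (-Complex.I * η * Complex.exp (-Complex.I * η * s)) s := by
    simpa [mul_comm] using (((hasDerivAt_id (s : ℂ)).const_mul (-Complex.I * η)).cexp).comp_ofReal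
  have hφ' : Continuous fun s : ℝ => -Complex.I * η * Complex.exp (-Complex.I * η * s) := by
    fun_prop
  rw [integral_mul_deriv_eq_deriv_mul (fun s _ => hφ s) hf (hφ'.intervalIntegrable a b) hf']
  simp only [mul_assoc (-Complex.I * η), integral_const_mul]
  linear_combination (η * ∫ s in a..b, Complex.exp (-Complex.I * η * s) * f s) * Complex.I_mul_I

theorem Complex.exp_neg_I_mul_sub_period {β η : ℝ} (hβ : β ≠ 0) {m : ℤ}
    (hη : η = 2 * Real.pi * m / β) (s : ℝ) :
    Complex.exp (-Complex.I * η * ↑(s - β)) = Complex.exp (-Complex.I * η * s) := by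
  have hηβ : (η : ℂ) * β = m * (2 * Real.pi) := by
    have : (β : ℂ) ≠ 0 := by exact_mod_cast hβ
    rw [hη]; push_cast; field_simp
  rw [← (Complex.exp_periodic.int_mul m) (-Complex.I * η * s)]
  congr 1
  push_cast
  linear_combination Complex.I * hηβ

section Gibbs

variable {d : ℕ}

theorem imagTimeEv_zero (K X : Matrix (Fin d) (Fin d) ℂ) : imagTimeEv K X 0 = X := by
  simp [imagTimeEv]

theorem gibbsExp_sub (β : ℝ) (K X Y : Matrix (Fin d) (Fin d) ℂ) :
    gibbsExp β K (X - Y) = gibbsExp β K X - gibbsExp β K Y := by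
  simp only [gibbsExp, sub_mul, Matrix.trace_sub, sub_div]

theorem gibbsExp_imagTimeEv_mul_eq_mul_imagTimeEv_sub (β s : ℝ)
    (K X B : Matrix (Fin d) (Fin d) ℂ) :
    gibbsExp β K (imagTimeEv K X s * B) = gibbsExp β K (B * imagTimeEv K X (s - β)) := by
  set E : ℂ → Matrix (Fin d) (Fin d) ℂ := fun u => exp (u • K)
  have hmul (u v : ℂ) : E u * E v = E (u + v) := exp_smul_mul_exp_smul K u v
  unfold gibbsExp imagTimeEv
  congr 1
  calc (E s * X * E (-s) * B * E (-β)).trace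
      = (X * E (-s) * B * E (-β) * E s).trace := by
        rw [Matrix.trace_mul_comm (X * E (-s) * B * E (-β))]; simp only [mul_assoc]
    _ = (X * E (-s) * (B * E ↑(s - β))).trace := by
        rw [mul_assoc _ (E _), hmul, mul_assoc]; push_cast; ring_nf
    _ = (B * E ↑(s - β) * (X * E (-s))).trace := Matrix.trace_mul_comm _ _
    _ = (B * (E ↑(s - β) * X * E (-↑(s - β))) * E (-β)).trace := by
        rw [show E (-s) = E (-↑(s - β)) * E (-β) by rw [hmul]; push_cast; ring_nf]
        simp only [mul_assoc]

theorem hasDerivAt_imagTimeEv (K X : Matrix (Fin d) (Fin d) ℂ) (s : ℝ) :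
    HasDerivAt (imagTimeEv K X) (imagTimeEv K (K * X - X * K) s) s := by
  have h := (hasDerivAt_exp_smul_mul_mul_exp_neg_smul K X (s : ℂ)).scomp s
    Complex.ofRealCLM.hasDerivAt
  rw [Complex.ofRealCLM_apply, Complex.ofReal_one, one_smul] at h
  exact h

theorem hasDerivAt_gibbsExp {M : ℝ → Matrix (Fin d) (Fin d) ℂ} {M' : Matrix (Fin d) (Fin d) ℂ}
    {s : ℝ} (β : ℝ) (K : Matrix (Fin d) (Fin d) ℂ) (h : HasDerivAt M M' s) :
    HasDerivAt (fun t => gibbsExp β K (M t)) (gibbsExp β K M') s :=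
  let L := (Matrix.traceLinearMap (Fin d) ℂ ℂ ∘ₗ
    LinearMap.mulRight ℂ (exp ((-(β : ℂ)) • K))).toContinuousLinearMap.restrictScalars ℝ
  (L.hasFDerivAt.comp_hasDerivAt s h).div_const _

theorem hasDerivAt_gibbsExp_imagTimeEv_mul (β : ℝ) (K X B : Matrix (Fin d) (Fin d) ℂ) (s : ℝ) :
    HasDerivAt (fun t => gibbsExp β K (imagTimeEv K X t * B))
      (gibbsExp β K (imagTimeEv K (K * X - X * K) s * B)) s :=
  hasDerivAt_gibbsExp β K ((hasDerivAt_imagTimeEv K X s).mul_const B)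

theorem hasDerivAt_gibbsExp_mul_imagTimeEv (β : ℝ) (K X B : Matrix (Fin d) (Fin d) ℂ) (s : ℝ) :
    HasDerivAt (fun t => gibbsExp β K (B * imagTimeEv K X t))
      (gibbsExp β K (B * imagTimeEv K (K * X - X * K) s)) s :=
  hasDerivAt_gibbsExp β K ((hasDerivAt_imagTimeEv K X s).const_mul B)

theorem continuous_gibbsExp_imagTimeEv_mul (β : ℝ) (K X B : Matrix (Fin d) (Fin d) ℂ) :
    Continuous fun s => gibbsExp β K (imagTimeEv K X s * B) :=
  continuous_iff_continuousAt.2 fun s =>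
    (hasDerivAt_gibbsExp_imagTimeEv_mul β K X B s).continuousAt

theorem continuous_gibbsExp_mul_imagTimeEv (β : ℝ) (K X B : Matrix (Fin d) (Fin d) ℂ) :
    Continuous fun s => gibbsExp β K (B * imagTimeEv K X s) :=
  continuous_iff_continuousAt.2 fun s =>
    (hasDerivAt_gibbsExp_mul_imagTimeEv β K X B s).continuousAt

theorem integral_mul_timeOrdered {φ : ℝ → ℂ} (hφ : Continuous φ) {b : ℝ} (hb : 0 ≤ b) (β : ℝ)
    (K X B : Matrix (Fin d) (Fin d) ℂ) :
    ∫ s in -b..b, φ s * timeOrdered β K X B s =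
      (∫ s in -b..0, φ s * gibbsExp β K (B * imagTimeEv K X s)) +
        ∫ s in 0..b, φ s * gibbsExp β K (imagTimeEv K X s * B) := by
  simp only [timeOrdered, mul_ite]
  exact integral_ite_le_eq_add (neg_nonpos.2 hb) hb
    ((hφ.mul (continuous_gibbsExp_mul_imagTimeEv β K X B)).intervalIntegrable _ _)
    ((hφ.mul (continuous_gibbsExp_imagTimeEv_mul β K X B)).intervalIntegrable _ _)

end Gibbs

theorem stmt17_general {d : ℕ} (β : ℝ) (hβ : 0 < β)
    (K A B : Matrix (Fin d) (Fin d) ℂ)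
    (η : ℝ) (hη : ∃ m : ℤ, η = 2 * Real.pi * (m : ℝ) / β) :
    (η : ℂ) *
        ∫ s in (-(β / 2))..(β / 2),
          Complex.exp (-Complex.I * (η : ℂ) * (s : ℂ)) * timeOrdered β K A B s =
      -Complex.I *
          (∫ s in (-(β / 2))..(β / 2),
            Complex.exp (-Complex.I * (η : ℂ) * (s : ℂ)) *
              timeOrdered β K (K * A - A * K) B s) -
        Complex.I * gibbsExp β K (A * B - B * A) := by
  obtain ⟨m, hm⟩ := hη
  have hφ : Continuous fun s : ℝ => Complex.exp (-Complex.I * η * s) := by fun_prop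
  have hb : 0 ≤ β / 2 := by positivity
  have hhalf : β / 2 - β = -(β / 2) := by ring
  have hkms := gibbsExp_imagTimeEv_mul_eq_mul_imagTimeEv_sub β (β / 2) K A B
  have hperiod := Complex.exp_neg_I_mul_sub_period hβ.ne' hm (β / 2)
  rw [hhalf] at hkms hperiod
  have hright := mul_integral_cexp_mul_eq_of_hasDerivAt η
    (fun s _ => hasDerivAt_gibbsExp_imagTimeEv_mul β K A B s)
    ((continuous_gibbsExp_imagTimeEv_mul β K (K * A - A * K) B).intervalIntegrable 0 (β / 2))
  have hleft := mul_integral_cexp_mul_eq_of_hasDerivAt η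
    (fun s _ => hasDerivAt_gibbsExp_mul_imagTimeEv β K A B s)
    ((continuous_gibbsExp_mul_imagTimeEv β K (K * A - A * K) B).intervalIntegrable (-(β / 2)) 0)
  rw [← hkms, hperiod] at hleft
  simp only [Complex.ofReal_zero, mul_zero, Complex.exp_zero, one_mul, imagTimeEv_zero]
    at hleft hright
  rw [integral_mul_timeOrdered hφ hb, integral_mul_timeOrdered hφ hb, gibbsExp_sub]
  linear_combination hleft + hright

/-- The Euclidean (imaginary-time) Ward identity in the Gibbs state: the
jump of the time-ordering produces the commutator (Schwinger) term, while the boundary terms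
cancel by the KMS property whenever `ηβ ∈ 2πℤ`. -/
theorem stmt17 {d : ℕ} (β : ℝ) (hβ : 0 < β)
    (K A B : Matrix (Fin d) (Fin d) ℂ) (hK : K.IsHermitian)
    (η : ℝ) (hη : ∃ m : ℤ, η = 2 * Real.pi * (m : ℝ) / β) :
    (η : ℂ) *
        ∫ s in (-(β / 2))..(β / 2),
          Complex.exp (-Complex.I * (η : ℂ) * (s : ℂ)) * timeOrdered β K A B s =
      -Complex.I *
          (∫ s in (-(β / 2))..(β / 2),
            Complex.exp (-Complex.I * (η : ℂ) * (s : ℂ)) *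
              timeOrdered β K (K * A - A * K) B s) -
        Complex.I * gibbsExp β K (A * B - B * A) :=
  stmt17_general β hβ K A B η hη
end
end

section
/- Let τ, c₀, c, A₀ > 0, and let α ∈ ℝ satisfy |mα|_T ≥ c₀|m|^{-τ} for every integer m ≠ 0. Let v₀, v₁ ∈ ℝ∖{0}, let χ be a smooth cutoff function with parameters δ, γ where 0 < δ ≤ min(1, |v₁|) and γ > 1, and set g(q) := χ(√(v₀²q₀²+v₁²q₁²))/(i v₀ q₀ + v₁ q₁) for q = (q₀,q₁) with q₀ ≠ 0. Let (a_m)_{m∈ℤ} be complex numbers with |a_m| ≤ A₀ e^{-c|m|}. Then for every M ≥ 1 there exist C > 0 and ε ∈ (0, 1/4], depending only on τ, c₀, c, A₀, v₀, v₁, δ, γ and M, such that for every q = (q₀,q₁) ∈ ℝ² with 0 < ‖q‖ ≤ ε and |q₀| ≥ ‖q‖^M: |Σ_{m∈ℤ∖{0}} a_m g(q₀, q₁ + mα)| ≤ C ‖q‖^{-1/2}. -/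
noncomputable section

/-!
Bound the `m`-th term by `A₀ e^{-c|m|} / |i v₀ q₀ + v₁ (q₁ + mα)|`, using `|χ| ≤ 1`, and split
the harmonics at `|mα|_T = √‖q‖`. If `|mα|_T ≥ √‖q‖`, then `|q₁ + mα| ≥ √‖q‖ - ‖q‖ ≥ √‖q‖ / 2`,
so the denominator is at least `|v₁| √‖q‖ / 2`. Otherwise the Diophantine condition forces
`|m| > (c₀ / √‖q‖)^{1/τ}`, so half of the exponential decay, `e^{-c|m|/2} ≤ n! / (c|m|/2)^n`, is
`O(‖q‖^M)` for `n ≥ 2τM`, which beats the denominator `≥ |v₀| |q₀| ≥ |v₀| ‖q‖^M`. Either way the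
term is `O(‖q‖^{-1/2} e^{-c|m|/2})`, and these bounds are summable in `m`.
-/

open Real Complex Nat

theorem torusDist_le_abs (x : ℝ) : torusDist x ≤ |x| := by
  have hbdd : BddBelow (Set.range fun n : ℤ => |x + n * (2 * π)|) :=
    ⟨0, by rintro y ⟨n, rfl⟩; exact abs_nonneg _⟩
  simpa [torusDist] using ciInf_le hbdd 0

theorem exists_exp_neg_mul_le_rpow_of_mul_rpow_neg_lt {τ c₀ b : ℝ} (hτ : 0 < τ) (hc₀ : 0 < c₀)
    (hb : 0 < b) (N : ℝ) :
    ∃ K > 0, ∀ x u : ℝ, 0 < x → 0 < u → u ≤ 1 → c₀ * x ^ (-τ) < u →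
      rexp (-(b * x)) ≤ K * u ^ N := by
  set n := ⌈τ * N⌉₊
  refine ⟨n ! / (b * c₀ ^ τ⁻¹) ^ n, by positivity, fun x u hx hu hu1 h => ?_⟩
  have hx_large : c₀ ^ τ⁻¹ ≤ u ^ τ⁻¹ * x := by
    rw [rpow_neg hx.le, ← div_eq_mul_inv, div_lt_iff₀ (by positivity)] at h
    calc c₀ ^ τ⁻¹ ≤ (u * x ^ τ) ^ τ⁻¹ := by gcongr
      _ = u ^ τ⁻¹ * x := by rw [mul_rpow hu.le (by positivity), rpow_rpow_inv hx.le hτ.ne']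
  have hfac : rexp (-(b * x)) ≤ n ! / (b * x) ^ n := by
    rw [Real.exp_neg, ← one_div, div_le_div_iff₀ (by positivity) (by positivity), one_mul]
    simpa [div_le_iff₀, Nat.factorial_pos, mul_comm] using
      Real.pow_div_factorial_le_exp _ (by positivity : 0 ≤ b * x) n
  have hN : N ≤ τ⁻¹ * n := by
    rw [inv_mul_eq_div, le_div_iff₀ hτ, mul_comm]
    exact Nat.le_ceil _
  calc rexp (-(b * x)) ≤ n ! / (b * x) ^ n := hfac
    _ ≤ n ! / (b * c₀ ^ τ⁻¹) ^ n * (u ^ τ⁻¹) ^ n := by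
      rw [div_mul_eq_mul_div, div_le_div_iff₀ (by positivity) (by positivity), mul_assoc,
        ← mul_pow, mul_left_comm]
      gcongr
    _ = n ! / (b * c₀ ^ τ⁻¹) ^ n * u ^ (τ⁻¹ * n) := by rw [rpow_mul hu.le, rpow_natCast]
    _ ≤ n ! / (b * c₀ ^ τ⁻¹) ^ n * u ^ N :=
      mul_le_mul_of_nonneg_left (rpow_le_rpow_of_exponent_ge hu hu1 hN) (by positivity)

theorem half_sqrt_le_abs_add_of_sqrt_le_torusDist {t q y : ℝ} (ht : t ≤ 1 / 4)
    (hy : √t ≤ torusDist y) (hq : |q| ≤ t) : √t / 2 ≤ |q + y| := by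
  have ht0 : 0 ≤ t := (abs_nonneg q).trans hq
  have ht_le : t ≤ √t / 2 := by nlinarith [mul_self_sqrt ht0, sqrt_nonneg t]
  have := abs_sub (q + y) q
  rw [add_sub_cancel_left] at this
  linarith [torusDist_le_abs y]

theorem abs_mul_abs_le_norm_I_mul_add (a b c d : ℝ) :
    |a| * |b| ≤ ‖I * a * b + c * d‖ ∧ |c| * |d| ≤ ‖I * a * b + c * d‖ := by
  constructor
  · simpa [abs_mul] using abs_im_le_norm (I * a * b + c * d)
  · simpa [abs_mul] using abs_re_le_norm (I * a * b + c * d)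

theorem norm_mul_ofReal_div_le_of_abs_le_one {a z : ℂ} {r : ℝ} (hr : |r| ≤ 1) :
    ‖a * (r / z)‖ ≤ ‖a‖ / ‖z‖ := by
  rw [norm_mul, norm_div, norm_real, norm_eq_abs, mul_div_assoc']
  exact div_le_div_of_nonneg_right (mul_le_of_le_one_right (norm_nonneg a) hr) (norm_nonneg z)

theorem summable_exp_neg_mul_abs_int {c : ℝ} (hc : 0 < c) :
    Summable fun m : ℤ => rexp (-c * |(m : ℝ)|) := by
  apply Summable.of_nat_of_neg <;>
  · simp only [Int.cast_natCast, Int.cast_neg, abs_neg, Nat.abs_cast]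
    simpa [mul_comm, neg_mul] using summable_exp_nat_mul_iff.mpr (neg_lt_zero.mpr hc)

theorem summable_and_norm_tsum_le_of_norm_le_mul {ι E : Type*} [NormedAddCommGroup E]
    [CompleteSpace E] {f : ι → E} {g : ι → ℝ} {K : ℝ} (hg : Summable g)
    (h : ∀ i, ‖f i‖ ≤ K * g i) : Summable f ∧ ‖∑' i, f i‖ ≤ K * ∑' i, g i :=
  ⟨(hg.mul_left K).of_norm_bounded h,
    tsum_mul_left (a := K) ▸ tsum_of_norm_bounded (hg.mul_left K).hasSum h⟩

theorem exists_exp_neg_mul_div_norm_propagator_le {τ c₀ c v₀ v₁ : ℝ} (hτ : 0 < τ) (hc₀ : 0 < c₀)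
    (hc : 0 < c) (hv₀ : v₀ ≠ 0) (hv₁ : v₁ ≠ 0) (M : ℝ) :
    ∃ D > 0, ∀ (α : ℝ) (m : ℤ), m ≠ 0 → c₀ * |(m : ℝ)| ^ (-τ) ≤ torusDist (m * α) →
      ∀ t q₀ q₁ : ℝ, 0 < t → t ≤ 1 / 4 → t ^ M ≤ |q₀| → |q₁| ≤ t →
        rexp (-c * |(m : ℝ)|) / ‖I * v₀ * q₀ + v₁ * ((q₁ + m * α : ℝ) : ℂ)‖ ≤
          D * t ^ (-(1 / 2) : ℝ) * rexp (-(c / 2) * |(m : ℝ)|) := by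
  obtain ⟨K, hK, hdecay⟩ :=
    exists_exp_neg_mul_le_rpow_of_mul_rpow_neg_lt hτ hc₀ (half_pos hc) (2 * M)
  refine ⟨max (2 / |v₁|) (K / |v₀|), by positivity, ?_⟩
  intro α m hm hdio t q₀ q₁ ht0 ht hq₀ hq₁
  set x : ℝ := q₁ + m * α
  set z : ℂ := I * v₀ * q₀ + v₁ * (x : ℂ)
  have hz : |v₀| * t ^ M ≤ ‖z‖ ∧ |v₁| * |x| ≤ ‖z‖ := by
    obtain ⟨h₀, h₁⟩ := abs_mul_abs_le_norm_I_mul_add v₀ q₀ v₁ x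
    exact ⟨le_trans (by gcongr) h₀, h₁⟩
  rcases le_or_gt √t (torusDist (m * α)) with hreg | hsmall
  · have hx := half_sqrt_le_abs_add_of_sqrt_le_torusDist ht hreg hq₁
    have hinv_sqrt : (√t)⁻¹ = t ^ (-(1 / 2) : ℝ) := by rw [sqrt_eq_rpow, rpow_neg ht0.le]
    calc rexp (-c * |(m : ℝ)|) / ‖z‖ ≤ rexp (-(c / 2) * |(m : ℝ)|) / (|v₁| * (√t / 2)) :=
          div_le_div₀ (by positivity) (exp_le_exp.2 (by nlinarith [abs_nonneg (m : ℝ)]))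
            (by positivity) ((mul_le_mul_of_nonneg_left hx (abs_nonneg _)).trans hz.2)
        _ = 2 / |v₁| * (√t)⁻¹ * rexp (-(c / 2) * |(m : ℝ)|) := by field_simp
        _ ≤ _ := by
          rw [hinv_sqrt]
          gcongr
          exact le_max_left _ _
  · have hm_pos : 0 < |(m : ℝ)| := by positivity
    have hdecay_m := hdecay |m| √t hm_pos (sqrt_pos.2 ht0) (sqrt_le_one.2 (by linarith))
      (hdio.trans_lt hsmall)
    have hexp : rexp (-c * |(m : ℝ)|) =
        rexp (-(c / 2) * |(m : ℝ)|) * rexp (-(c / 2 * |(m : ℝ)|)) := by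
      rw [← Real.exp_add]; ring_nf
    rw [sqrt_eq_rpow, ← rpow_mul ht0.le, one_div_mul_eq_div,
      mul_div_cancel_left₀ M two_ne_zero] at hdecay_m
    calc rexp (-c * |(m : ℝ)|) / ‖z‖
        ≤ rexp (-(c / 2) * |(m : ℝ)|) * (K * t ^ M) / (|v₀| * t ^ M) := by
          rw [hexp]
          exact div_le_div₀ (by positivity) (by gcongr) (by positivity) hz.1
      _ = K / |v₀| * rexp (-(c / 2) * |(m : ℝ)|) := by field_simp
      _ ≤ _ := by
          gcongr
          exact (le_max_right _ _).trans (le_mul_of_one_le_right (by positivity)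
            (one_le_rpow_of_pos_of_le_one_of_nonpos ht0 (by linarith) (by norm_num)))

theorem stmt18_general
    (τ c₀ c A₀ v₀ v₁ δ γ : ℝ)
    (hτ : 0 < τ) (hc₀ : 0 < c₀) (hc : 0 < c) (hA₀ : 0 < A₀)
    (hv₀ : v₀ ≠ 0) (hv₁ : v₁ ≠ 0)
    (M : ℝ) :
    ∃ C > 0, ∃ ε : ℝ, 0 < ε ∧ ε ≤ 1 / 4 ∧
      ∀ α : ℝ, (∀ m : ℤ, m ≠ 0 → c₀ * |(m : ℝ)| ^ (-τ) ≤ torusDist ((m : ℝ) * α)) →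
      ∀ χ : ℝ → ℝ, ContDiff ℝ (⊤ : ℕ∞) χ → (∀ x, χ (-x) = χ x) →
        (∀ x, 0 ≤ χ x ∧ χ x ≤ 1) → (∀ x, |x| ≤ δ / γ → χ x = 1) →
        (∀ x, δ ≤ |x| → χ x = 0) →
      ∀ a : ℤ → ℂ, (∀ m : ℤ, ‖a m‖ ≤ A₀ * Real.exp (-c * |(m : ℝ)|)) →
      ∀ q : ℝ × ℝ, 0 < ‖q‖ → ‖q‖ ≤ ε → ‖q‖ ^ M ≤ |q.1| →
        (Summable fun m : {m : ℤ // m ≠ 0} =>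
          a m.1 *
            ((χ (Real.sqrt (v₀ ^ 2 * q.1 ^ 2 + v₁ ^ 2 * (q.2 + (m.1 : ℝ) * α) ^ 2)) : ℂ) /
              (Complex.I * (v₀ : ℂ) * (q.1 : ℂ) +
                (v₁ : ℂ) * ((q.2 + (m.1 : ℝ) * α : ℝ) : ℂ)))) ∧
        ‖∑' m : {m : ℤ // m ≠ 0},
            a m.1 *
              ((χ (Real.sqrt (v₀ ^ 2 * q.1 ^ 2 + v₁ ^ 2 * (q.2 + (m.1 : ℝ) * α) ^ 2)) : ℂ) /
                (Complex.I * (v₀ : ℂ) * (q.1 : ℂ) +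
                  (v₁ : ℂ) * ((q.2 + (m.1 : ℝ) * α : ℝ) : ℂ)))‖ ≤
          C * ‖q‖ ^ (-(1 / 2) : ℝ) := by
  obtain ⟨D, hD, hharmonic⟩ := exists_exp_neg_mul_div_norm_propagator_le hτ hc₀ hc hv₀ hv₁ M
  set S := ∑' m : {m : ℤ // m ≠ 0}, rexp (-(c / 2) * |(m.1 : ℝ)|)
  have hsum : Summable fun m : {m : ℤ // m ≠ 0} => rexp (-(c / 2) * |(m.1 : ℝ)|) :=
    (summable_exp_neg_mul_abs_int (half_pos hc)).subtype _
  have hS : 0 < S := hsum.tsum_pos (fun _ => (exp_pos _).le) ⟨1, one_ne_zero⟩ (exp_pos _)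
  refine ⟨A₀ * D * S, by positivity, 1 / 4, by norm_num, le_rfl, ?_⟩
  intro α hα χ _ _ hχ _ _ a ha q hq hqε hqM
  have hq₁ : |q.2| ≤ ‖q‖ := by simpa using norm_snd_le q
  have hχ_abs (x : ℝ) : |χ x| ≤ 1 := abs_le.2 ⟨by linarith [(hχ x).1], (hχ x).2⟩
  refine (summable_and_norm_tsum_le_of_norm_le_mul (K := A₀ * D * ‖q‖ ^ (-(1 / 2) : ℝ)) hsum
    fun ⟨m, hm⟩ => ?_).imp_right (le_of_le_of_eq · (by ring))
  refine (norm_mul_ofReal_div_le_of_abs_le_one (hχ_abs _)).trans ?_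
  calc ‖a m‖ / ‖_‖ ≤ A₀ * (rexp (-c * |(m : ℝ)|) / ‖_‖) := by
        rw [← mul_div_assoc]
        gcongr
        exact ha m
    _ ≤ A₀ * (D * ‖q‖ ^ (-(1 / 2) : ℝ) * rexp (-(c / 2) * |(m : ℝ)|)) := by
        gcongr
        exact hharmonic α m hm (hα m hm) ‖q‖ q.1 q.2 hq hqε hqM hq₁
    _ = _ := by ring

/-- The sum over nonzero harmonics of the quasi-periodic oscillation
amplitudes evaluated on the shifted regularized relativistic propagator is of order
`‖q‖^{-1/2}`, i.e. subleading with respect to the `m = 0` singularity. -/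
theorem stmt18
    (τ c₀ c A₀ v₀ v₁ δ γ : ℝ)
    (hτ : 0 < τ) (hc₀ : 0 < c₀) (hc : 0 < c) (hA₀ : 0 < A₀)
    (hv₀ : v₀ ≠ 0) (hv₁ : v₁ ≠ 0) (hδ0 : 0 < δ) (hδ : δ ≤ min 1 |v₁|) (hγ : 1 < γ)
    (M : ℝ) (hM : 1 ≤ M) :
    ∃ C > 0, ∃ ε : ℝ, 0 < ε ∧ ε ≤ 1 / 4 ∧
      ∀ α : ℝ, (∀ m : ℤ, m ≠ 0 → c₀ * |(m : ℝ)| ^ (-τ) ≤ torusDist ((m : ℝ) * α)) →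
      ∀ χ : ℝ → ℝ, ContDiff ℝ (⊤ : ℕ∞) χ → (∀ x, χ (-x) = χ x) →
        (∀ x, 0 ≤ χ x ∧ χ x ≤ 1) → (∀ x, |x| ≤ δ / γ → χ x = 1) →
        (∀ x, δ ≤ |x| → χ x = 0) →
      ∀ a : ℤ → ℂ, (∀ m : ℤ, ‖a m‖ ≤ A₀ * Real.exp (-c * |(m : ℝ)|)) →
      ∀ q : ℝ × ℝ, 0 < ‖q‖ → ‖q‖ ≤ ε → ‖q‖ ^ M ≤ |q.1| →
        (Summable fun m : {m : ℤ // m ≠ 0} =>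
          a m.1 *
            ((χ (Real.sqrt (v₀ ^ 2 * q.1 ^ 2 + v₁ ^ 2 * (q.2 + (m.1 : ℝ) * α) ^ 2)) : ℂ) /
              (Complex.I * (v₀ : ℂ) * (q.1 : ℂ) +
                (v₁ : ℂ) * ((q.2 + (m.1 : ℝ) * α : ℝ) : ℂ)))) ∧
        ‖∑' m : {m : ℤ // m ≠ 0},
            a m.1 *
              ((χ (Real.sqrt (v₀ ^ 2 * q.1 ^ 2 + v₁ ^ 2 * (q.2 + (m.1 : ℝ) * α) ^ 2)) : ℂ) /
                (Complex.I * (v₀ : ℂ) * (q.1 : ℂ) +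
                  (v₁ : ℂ) * ((q.2 + (m.1 : ℝ) * α : ℝ) : ℂ)))‖ ≤
          C * ‖q‖ ^ (-(1 / 2) : ℝ) :=
  stmt18_general τ c₀ c A₀ v₀ v₁ δ γ hτ hc₀ hc hA₀ hv₀ hv₁ M

end
end
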